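/- arXiv:1808.05816 — 5 statements merged into one kernel-verified Lean document; each statement's English description precedes it below -/
import Mathlib

section
/- Let X be a nonnegative càdlàg process on [0,T] and let X*_T := sup_{0≤s≤T} X_s. Then for every β ∈ (0,1), E[(X*_T)^β] ≤ (1/(1-β)) · (sup_{τ} E[X_τ])^β, where the supremum is taken over all stopping times τ with values in [0,T]. -/
/-!
For `t > 0`, the first time at which `X` exceeds `t` along a finite set of times in `[0, T]` is a
stopping time, and Markov's inequality for the process stopped there gives
`P(X exceeds t on the set) ≤ c / t`. By right-continuity the running supremum `X*_T` equals the
supremum over the dyadic points of `[0, T]`, an increasing union of finite sets, so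
`P(X*_T > t) ≤ c / t`. Integrating this tail bound against `β t ^ (β - 1)`, and bounding the
tail by `1` below `t = c`, gives `E[(X*_T)^β] ≤ c^β + c^β β / (1 - β) = c^β / (1 - β)`.
-/

open MeasureTheory Filter Set
open scoped ENNReal

theorem Real.sSup_eq_of_subset_of_subset_closure {s t : Set ℝ} (hst : s ⊆ t)
    (hts : t ⊆ closure s) : sSup s = sSup t := by
  -- when `s` is unbounded, so is `t`, and both suprema are the junk value `0`
  rcases s.eq_empty_or_nonempty with rfl | hs
  · rw [closure_empty, subset_empty_iff] at hts
    rw [hts]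
  by_cases hbdd : BddAbove s
  · exact ((isLUB_iff_of_subset_of_subset_closure hst hts).1
      (isLUB_csSup hs hbdd)).csSup_eq (hs.mono hst) |>.symm
  · rw [Real.sSup_of_not_bddAbove hbdd,
      Real.sSup_of_not_bddAbove fun h => hbdd (h.mono hst)]

theorem Real.iSup_eq_iSup_of_mem_closure_inter_Ici {Y : ℝ → ℝ} {S D : Set ℝ} (hDS : D ⊆ S)
    (hD : ∀ s ∈ S, s ∈ closure (D ∩ Ici s))
    (hY : ∀ s ∈ S, ContinuousWithinAt Y (Ici s) s) :
    ⨆ s : S, Y s = ⨆ s : D, Y s := by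
  simp only [iSup, ← image_eq_range]
  refine (Real.sSup_eq_of_subset_of_subset_closure (image_mono hDS) ?_).symm
  rintro _ ⟨s, hs, rfl⟩
  exact closure_mono (image_mono inter_subset_left)
    (((hY s hs).mono inter_subset_right).mem_closure_image (hD s hs))

noncomputable def dyadicGrid (T : ℝ) (n : ℕ) : Finset ℝ :=
  (Finset.range (2 ^ n + 1)).image fun k : ℕ => k * T / 2 ^ n

theorem mem_dyadicGrid {T : ℝ} {n : ℕ} {s : ℝ} :
    s ∈ dyadicGrid T n ↔ ∃ k : ℕ, k ≤ 2 ^ n ∧ k * T / 2 ^ n = s := by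
  simp [dyadicGrid]

theorem dyadicGrid_subset_Icc {T : ℝ} (hT : 0 ≤ T) (n : ℕ) :
    (dyadicGrid T n : Set ℝ) ⊆ Icc 0 T := by
  intro s hs
  obtain ⟨k, hk, rfl⟩ := mem_dyadicGrid.1 hs
  have hk' : (k : ℝ) ≤ 2 ^ n := by exact_mod_cast hk
  refine ⟨by positivity, div_le_of_le_mul₀ (by positivity) hT ?_⟩
  rw [mul_comm]
  exact mul_le_mul_of_nonneg_left hk' hT

theorem dyadicGrid_mono (T : ℝ) : Monotone (dyadicGrid T) := by
  refine monotone_nat_of_le_succ fun n s hs => ?_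
  obtain ⟨k, hk, rfl⟩ := mem_dyadicGrid.1 hs
  refine mem_dyadicGrid.2 ⟨2 * k, by rw [pow_succ]; omega, ?_⟩
  push_cast
  ring

theorem mem_closure_iUnion_dyadicGrid_inter_Ici {T s : ℝ} (hT : 0 < T) (hs : s ∈ Icc 0 T) :
    s ∈ closure ((⋃ n, (dyadicGrid T n : Set ℝ)) ∩ Ici s) := by
  refine Metric.mem_closure_iff.2 fun ε hε => ?_
  obtain ⟨n, hn⟩ := exists_pow_lt_of_lt_one (div_pos hε hT) (by norm_num : (2 : ℝ)⁻¹ < 1)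
  set h := T / 2 ^ n with h_def
  have hh : 0 < h := by positivity
  have hhε : h < ε := by rwa [inv_pow, lt_div_iff₀ hT, inv_mul_eq_div] at hn
  set k := ⌈s / h⌉₊
  have hsk : s / h ≤ k := Nat.le_ceil _
  have hks : (k : ℝ) < s / h + 1 := Nat.ceil_lt_add_one (div_nonneg hs.1 hh.le)
  refine ⟨k * h,
    ⟨mem_iUnion.2 ⟨n, mem_dyadicGrid.2 ⟨k, ?_, mul_div_assoc _ _ _⟩⟩, ?_⟩, ?_⟩
  · rw [Nat.ceil_le, Nat.cast_pow, Nat.cast_ofNat]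
    calc s / h ≤ T / h := by gcongr; exact hs.2
      _ = 2 ^ n := by rw [h_def]; field_simp
  · exact (div_le_iff₀ hh).1 hsk
  · rw [Real.dist_eq, abs_sub_lt_iff]
    have hkh : k * h < s + h := calc
      k * h < (s / h + 1) * h := by gcongr
      _ = s + h := by field_simp
    constructor <;> nlinarith [(div_le_iff₀ hh).1 hsk]

section FirstEntranceTime

open scoped Classical

variable {Ω ι β : Type*} {m0 : MeasurableSpace Ω} [LinearOrder ι]

noncomputable def firstEntranceTime (X : ι → Ω → β) (B : Set β) (F : Finset ι) (T : ι)
    (ω : Ω) : ι :=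
  if h : {s ∈ F | X s ω ∈ B}.Nonempty then {s ∈ F | X s ω ∈ B}.min' h else T

variable {X : ι → Ω → β} {B : Set β} {F : Finset ι} {T : ι}

theorem firstEntranceTime_mem_of_subset {S : Set ι} (hF : (F : Set ι) ⊆ S) (hT : T ∈ S)
    (ω : Ω) : firstEntranceTime X B F T ω ∈ S := by
  unfold firstEntranceTime
  split_ifs with h
  · exact hF (Finset.mem_filter.1 (Finset.min'_mem _ h)).1
  · exact hT

theorem firstEntranceTime_mem (ω : Ω) (h : ∃ s ∈ F, X s ω ∈ B) :
    X (firstEntranceTime X B F T ω) ω ∈ B := by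
  have hne : {s ∈ F | X s ω ∈ B}.Nonempty := by simpa [Finset.Nonempty] using h
  rw [firstEntranceTime, dif_pos hne]
  exact (Finset.mem_filter.1 (Finset.min'_mem _ hne)).2

theorem firstEntranceTime_le_iff {r : ι} (hr : r < T) (ω : Ω) :
    firstEntranceTime X B F T ω ≤ r ↔ ∃ s ≤ r, s ∈ F ∧ X s ω ∈ B := by
  unfold firstEntranceTime
  split_ifs with h
  · simp [Finset.min'_eq_inf', Finset.inf'_le_iff, and_comm]
  · simp only [Finset.not_nonempty_iff_eq_empty, Finset.filter_eq_empty_iff] at h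
    simpa [hr.not_ge] using fun s _ hs hB => absurd hB (h hs)

theorem isStoppingTime_firstEntranceTime [MeasurableSpace β] {ℱ : Filtration ι m0}
    (hX : Adapted ℱ X) (hB : MeasurableSet B) (hF : ∀ s ∈ F, s ≤ T) :
    IsStoppingTime ℱ (fun ω => ((firstEntranceTime X B F T ω : ι) : WithTop ι)) := by
  intro r
  simp only [WithTop.coe_le_coe]
  rcases lt_or_ge r T with hr | hr
  · have : {ω | firstEntranceTime X B F T ω ≤ r} =
        ⋃ s ∈ F, ⋃ (_ : s ≤ r), X s ⁻¹' B := by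
      ext ω
      simp [firstEntranceTime_le_iff hr]
    rw [this]
    exact .biUnion F.countable_toSet fun s _ => .iUnion fun hsr => ℱ.mono hsr _ (hX s hB)
  · convert MeasurableSet.univ
    exact eq_univ_of_forall fun ω =>
      (firstEntranceTime_mem_of_subset (S := Iic T) hF le_rfl ω).trans hr

end FirstEntranceTime

section MaximalInequality

variable {Ω : Type*} {m0 : MeasurableSpace Ω} {μ : Measure Ω} [IsFiniteMeasure μ]
  {ℱ : Filtration ℝ m0} {X : ℝ → Ω → ℝ} {T c t : ℝ}

theorem measure_exists_lt_le_of_integral_stopped_le (hX : Adapted ℱ X)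
    (hX0 : ∀ s ω, 0 ≤ X s ω)
    (hint : ∀ τ : Ω → ℝ, IsStoppingTime ℱ (fun ω => (τ ω : WithTop ℝ)) →
      (∀ ω, τ ω ∈ Icc 0 T) → Integrable (fun ω => X (τ ω) ω) μ)
    (hc : ∀ τ : Ω → ℝ, IsStoppingTime ℱ (fun ω => (τ ω : WithTop ℝ)) →
      (∀ ω, τ ω ∈ Icc 0 T) → ∫ ω, X (τ ω) ω ∂μ ≤ c)
    (hT : 0 ≤ T) {F : Finset ℝ} (hF : (F : Set ℝ) ⊆ Icc 0 T) (ht : 0 < t) :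
    μ {ω | ∃ s ∈ F, t < X s ω} ≤ ENNReal.ofReal (c / t) := by
  set τ := firstEntranceTime X (Ioi t) F T
  have hτ : IsStoppingTime ℱ (fun ω => (τ ω : WithTop ℝ)) :=
    isStoppingTime_firstEntranceTime hX measurableSet_Ioi fun s hs => (hF hs).2
  have hτT : ∀ ω, τ ω ∈ Icc 0 T := firstEntranceTime_mem_of_subset hF ⟨hT, le_rfl⟩
  -- Markov's inequality for `X_τ`, which exceeds `t` wherever some `X_s`, `s ∈ F`, does
  have hMarkov := mul_meas_ge_le_integral_of_nonneg (ae_of_all μ fun ω => hX0 (τ ω) ω)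
    (hint τ hτ hτT) t
  have hsub : {ω | ∃ s ∈ F, t < X s ω} ⊆ {ω | t ≤ X (τ ω) ω} := fun ω hω =>
    show t ≤ X (τ ω) ω from le_of_lt (firstEntranceTime_mem (B := Ioi t) ω hω)
  calc μ {ω | ∃ s ∈ F, t < X s ω} ≤ μ {ω | t ≤ X (τ ω) ω} := measure_mono hsub
    _ = ENNReal.ofReal (μ.real {ω | t ≤ X (τ ω) ω}) := (ofReal_measureReal).symm
    _ ≤ ENNReal.ofReal (c / t) := by
      gcongr
      rw [le_div_iff₀ ht, mul_comm]
      exact hMarkov.trans (hc τ hτ hτT)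

theorem measure_lt_iSup_le_of_integral_stopped_le (hX : Adapted ℱ X)
    (hX0 : ∀ s ω, 0 ≤ X s ω)
    (hint : ∀ τ : Ω → ℝ, IsStoppingTime ℱ (fun ω => (τ ω : WithTop ℝ)) →
      (∀ ω, τ ω ∈ Icc 0 T) → Integrable (fun ω => X (τ ω) ω) μ)
    (hc : ∀ τ : Ω → ℝ, IsStoppingTime ℱ (fun ω => (τ ω : WithTop ℝ)) →
      (∀ ω, τ ω ∈ Icc 0 T) → ∫ ω, X (τ ω) ω ∂μ ≤ c)
    (hT : 0 ≤ T) {F : ℕ → Finset ℝ} (hF_mono : Monotone F)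
    (hF : ∀ n, (F n : Set ℝ) ⊆ Icc 0 T) (ht : 0 < t) :
    μ {ω | t < ⨆ s : ⋃ n, (F n : Set ℝ), X s ω} ≤ ENNReal.ofReal (c / t) := by
  have hsub : {ω | t < ⨆ s : ⋃ n, (F n : Set ℝ), X s ω} ⊆
      ⋃ n, {ω | ∃ s ∈ F n, t < X s ω} := fun ω (hω : t < _) => by
    have : Nonempty (⋃ n, (F n : Set ℝ)) := by
      by_contra h
      rw [not_nonempty_iff] at h
      simp [Real.iSup_of_isEmpty, ht.not_gt] at hω
    obtain ⟨⟨s, hs⟩, hst⟩ := exists_lt_of_lt_ciSup hω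
    obtain ⟨n, hn⟩ := mem_iUnion.1 hs
    exact mem_iUnion.2 ⟨n, s, hn, hst⟩
  have hmono : Monotone fun n => {ω | ∃ s ∈ F n, t < X s ω} :=
    fun m n hmn ω ⟨s, hs, hst⟩ => ⟨s, hF_mono hmn hs, hst⟩
  calc _ ≤ μ (⋃ n, {ω | ∃ s ∈ F n, t < X s ω}) := measure_mono hsub
    _ = ⨆ n, μ {ω | ∃ s ∈ F n, t < X s ω} := hmono.measure_iUnion
    _ ≤ _ := iSup_le fun n =>
      measure_exists_lt_le_of_integral_stopped_le hX hX0 hint hc hT (hF n) ht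

end MaximalInequality

theorem lintegral_Ioc_zero_rpow {a c : ℝ} (ha : -1 < a) (hc : 0 ≤ c) :
    ∫⁻ t in Ioc 0 c, ENNReal.ofReal (t ^ a) = ENNReal.ofReal (c ^ (a + 1) / (a + 1)) := by
  have hint : IntegrableOn (fun t : ℝ => t ^ a) (Ioc 0 c) := by
    rw [← intervalIntegrable_iff_integrableOn_Ioc_of_le hc]
    exact intervalIntegral.intervalIntegrable_rpow' ha
  rw [← ofReal_integral_eq_lintegral_ofReal hint
    ((ae_restrict_mem measurableSet_Ioc).mono fun t ht => Real.rpow_nonneg ht.1.le a),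
    ← intervalIntegral.integral_of_le hc, integral_rpow (.inl ha),
    Real.zero_rpow (by linarith), sub_zero]

theorem lintegral_Ioi_rpow {a c : ℝ} (ha : a < -1) (hc : 0 < c) :
    ∫⁻ t in Ioi c, ENNReal.ofReal (t ^ a) = ENNReal.ofReal (-c ^ (a + 1) / (a + 1)) := by
  rw [← ofReal_integral_eq_lintegral_ofReal (integrableOn_Ioi_rpow_of_lt ha hc)
    ((ae_restrict_mem measurableSet_Ioi).mono fun t ht => Real.rpow_nonneg (hc.trans ht).le a),
    integral_Ioi_rpow_of_lt ha hc]

theorem lintegral_Ioi_measure_lt_mul_rpow_le {Ω : Type*} {m0 : MeasurableSpace Ω}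
    {μ : Measure Ω} {f : Ω → ℝ} {β c : ℝ} (hβ : β < 1) (hc : 0 < c)
    (htail : ∀ t > 0, μ {ω | t < f ω} ≤ ENNReal.ofReal (c / t)) :
    ∫⁻ t in Ioi c, μ {ω | t < f ω} * ENNReal.ofReal (t ^ (β - 1)) ≤
      ENNReal.ofReal (c ^ β / (1 - β)) := by
  calc _ ≤ ∫⁻ t in Ioi c, ENNReal.ofReal c * ENNReal.ofReal (t ^ (β - 2)) := by
        refine setLIntegral_mono' measurableSet_Ioi fun t ht => ?_
        have ht0 : 0 < t := hc.trans ht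
        calc μ {ω | t < f ω} * ENNReal.ofReal (t ^ (β - 1))
            ≤ ENNReal.ofReal (c / t) * ENNReal.ofReal (t ^ (β - 1)) := by
              gcongr
              exact htail t ht0
          _ = ENNReal.ofReal c * ENNReal.ofReal (t ^ (β - 2)) := by
            rw [← ENNReal.ofReal_mul (by positivity), ← ENNReal.ofReal_mul hc.le,
              show β - 2 = β - 1 - 1 by ring, Real.rpow_sub_one ht0.ne' (β - 1)]
            congr 1
            ring
    _ = _ := by
        rw [lintegral_const_mul' _ _ ENNReal.ofReal_ne_top, lintegral_Ioi_rpow (by linarith) hc,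
          ← ENNReal.ofReal_mul hc.le, show β - 2 + 1 = β - 1 by ring, Real.rpow_sub_one hc.ne',
          neg_div, ← div_neg, neg_sub]
        congr 1
        field_simp

theorem integral_rpow_le_of_measure_lt_le {Ω : Type*} {m0 : MeasurableSpace Ω} {μ : Measure Ω}
    [IsZeroOrProbabilityMeasure μ] {f : Ω → ℝ} (hf : AEMeasurable f μ) (hf0 : 0 ≤ᵐ[μ] f)
    {β : ℝ} (hβ : β ∈ Ioo (0 : ℝ) 1) {c : ℝ} (hc : 0 ≤ c)
    (htail : ∀ t > 0, μ {ω | t < f ω} ≤ ENNReal.ofReal (c / t)) :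
    ∫ ω, f ω ^ β ∂μ ≤ (1 - β)⁻¹ * c ^ β := by
  obtain ⟨hβ0, hβ1⟩ := hβ
  rw [integral_eq_lintegral_of_nonneg_ae (hf0.mono fun ω hω => Real.rpow_nonneg hω β)
    (hf.pow_const β).aestronglyMeasurable]
  refine ENNReal.toReal_le_of_le_ofReal (by have := hβ1.le; positivity) ?_
  rw [lintegral_rpow_eq_lintegral_meas_lt_mul μ hf0 hf hβ0]
  rcases hc.eq_or_lt with rfl | hc
  · have hzero : ∀ t ∈ Ioi (0 : ℝ), μ {ω | t < f ω} = 0 := fun t ht => by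
      simpa using htail t ht
    rw [setLIntegral_congr_fun measurableSet_Ioi fun t ht => by rw [hzero t ht, zero_mul]]
    simp
  -- below `c` the tail is at most `1`, above it at most `c / t`
  rw [← Ioc_union_Ioi_eq_Ioi hc.le, lintegral_union measurableSet_Ioi Ioc_disjoint_Ioi_same]
  have hsmall : ∫⁻ t in Ioc 0 c, μ {ω | t < f ω} * ENNReal.ofReal (t ^ (β - 1)) ≤
      ENNReal.ofReal (c ^ β / β) := by
    calc _ ≤ ∫⁻ t in Ioc 0 c, ENNReal.ofReal (t ^ (β - 1)) :=
          lintegral_mono fun t => mul_le_of_le_one_left' prob_le_one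
      _ = _ := by rw [lintegral_Ioc_zero_rpow (by linarith) hc.le, sub_add_cancel]
  calc _ ≤ ENNReal.ofReal β *
        (ENNReal.ofReal (c ^ β / β) + ENNReal.ofReal (c ^ β / (1 - β))) := by
        gcongr
        exact lintegral_Ioi_measure_lt_mul_rpow_le hβ1 hc htail
    _ = _ := by
      rw [← ENNReal.ofReal_add (by positivity) (by have := hβ1.le; positivity),
        ← ENNReal.ofReal_mul hβ0.le]
      congr 1
      field_simp
      ring

theorem running_sup_beta_moment_le_general
    {Ω : Type*} {m0 : MeasurableSpace Ω} (μ : Measure Ω) [IsProbabilityMeasure μ]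
    (ℱ : Filtration ℝ m0) (T : ℝ) (hT : 0 < T)
    (X : ℝ → Ω → ℝ) (hadapted : Adapted ℱ X)
    (hXpos : ∀ t ω, 0 ≤ X t ω)
    (hrc : ∀ ω t, ContinuousWithinAt (fun s => X s ω) (Ici t) t)
    (β : ℝ) (hβ : β ∈ Ioo (0 : ℝ) 1)
    (c : ℝ)
    (hint : ∀ τ : Ω → ℝ, IsStoppingTime ℱ (fun ω => (τ ω : WithTop ℝ)) → (∀ ω, τ ω ∈ Icc 0 T) →
      Integrable (fun ω => X (τ ω) ω) μ)
    (hc : ∀ τ : Ω → ℝ, IsStoppingTime ℱ (fun ω => (τ ω : WithTop ℝ)) → (∀ ω, τ ω ∈ Icc 0 T) →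
      ∫ ω, X (τ ω) ω ∂μ ≤ c) :
    ∫ ω, (⨆ s : Icc (0 : ℝ) T, X s ω) ^ β ∂μ ≤ (1 - β)⁻¹ * c ^ β := by
  have hc0 : 0 ≤ c := (integral_nonneg fun ω => hXpos 0 ω).trans
    (hc _ (isStoppingTime_const ℱ 0) fun _ => ⟨le_rfl, hT.le⟩)
  set D := ⋃ n, (dyadicGrid T n : Set ℝ)
  have : Countable D := countable_iUnion fun n => (dyadicGrid T n).countable_toSet.to_subtype
  have hsup : ∀ ω, ⨆ s : Icc (0 : ℝ) T, X s ω = ⨆ s : D, X s ω := fun ω =>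
    Real.iSup_eq_iSup_of_mem_closure_inter_Ici (iUnion_subset (dyadicGrid_subset_Icc hT.le))
      (fun _ => mem_closure_iUnion_dyadicGrid_inter_Ici hT) fun s _ => hrc ω s
  have hmeas : Measurable fun ω => ⨆ s : D, X s ω :=
    .iSup fun s => (hadapted s).mono (ℱ.le s) le_rfl
  simp only [hsup]
  exact integral_rpow_le_of_measure_lt_le hmeas.aemeasurable
    (ae_of_all _ fun ω => Real.iSup_nonneg fun s => hXpos s ω) hβ hc0 fun t ht =>
      measure_lt_iSup_le_of_integral_stopped_le hadapted hXpos hint hc hT.le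
        (dyadicGrid_mono T) (dyadicGrid_subset_Icc hT.le) ht

/-- **Lemma 4.1 (ELbetaleqsupEL).** Let `X` be a nonnegative càdlàg adapted process on `[0,T]`
and `X*_T := sup_{0 ≤ s ≤ T} X_s`. If `c` dominates `E[X_τ]` for every `[0,T]`-valued stopping
time `τ`, then for every `β ∈ (0,1)`,
`E[(X*_T)^β] ≤ (1/(1-β)) · c^β`. -/
theorem running_sup_beta_moment_le
    {Ω : Type*} {m0 : MeasurableSpace Ω} (μ : Measure Ω) [IsProbabilityMeasure μ]
    (ℱ : Filtration ℝ m0) (T : ℝ) (hT : 0 < T)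
    (X : ℝ → Ω → ℝ) (hadapted : Adapted ℱ X)
    (hXpos : ∀ t ω, 0 ≤ X t ω)
    (hrc : ∀ ω t, ContinuousWithinAt (fun s => X s ω) (Ici t) t)
    (hll : ∀ ω t, ∃ l : ℝ, Tendsto (fun s => X s ω) (nhdsWithin t (Iio t)) (nhds l))
    (β : ℝ) (hβ : β ∈ Ioo (0 : ℝ) 1)
    (c : ℝ)
    (hint : ∀ τ : Ω → ℝ, IsStoppingTime ℱ (fun ω => (τ ω : WithTop ℝ)) → (∀ ω, τ ω ∈ Icc 0 T) →
      Integrable (fun ω => X (τ ω) ω) μ)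
    (hc : ∀ τ : Ω → ℝ, IsStoppingTime ℱ (fun ω => (τ ω : WithTop ℝ)) → (∀ ω, τ ω ∈ Icc 0 T) →
      ∫ ω, X (τ ω) ω ∂μ ≤ c) :
    ∫ ω, (⨆ s : Icc (0 : ℝ) T, X s ω) ^ β ∂μ ≤ (1 - β)⁻¹ * c ^ β :=
  running_sup_beta_moment_le_general μ ℱ T hT X hadapted hXpos hrc β hβ c hint hc
end

section
/- For all real numbers x, y ≥ 0 and μ > 0, the inequality e^x · y ≤ e^{x²/(2μ²)} + e^{2μ²} · ψ(y) holds, where ψ(y) := y · exp(μ√(2 log(1+y))). -/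
open Real

/-- For all `x, y ≥ 0` and `μ > 0`: `e^x · y ≤ e^{x²/(2μ²)} + e^{2μ²} · ψ(y)`, where
`ψ(y) = y · exp(μ √(2 log(1+y)))`. -/
theorem exp_mul_le_exp_sq_add_psi
    (x y μ : ℝ) (hx : 0 ≤ x) (hy : 0 ≤ y) (hμ : 0 < μ) :
    Real.exp x * y
      ≤ Real.exp (x ^ 2 / (2 * μ ^ 2))
        + Real.exp (2 * μ ^ 2) * (y * Real.exp (μ * Real.sqrt (2 * Real.log (1 + y)))) := by
  set s := Real.sqrt (2 * Real.log (1 + y)) with hs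
  have hlog : 0 ≤ Real.log (1 + y) := Real.log_nonneg (by linarith)
  have hs0 : 0 ≤ s := Real.sqrt_nonneg _
  have hs2 : s ^ 2 = 2 * Real.log (1 + y) := Real.sq_sqrt (by linarith)
  by_cases hcase : x ≤ μ * s + 2 * μ ^ 2
  · have h1 : Real.exp x * y ≤ Real.exp (2 * μ ^ 2) * (y * Real.exp (μ * s)) := by
      have : Real.exp x ≤ Real.exp (2 * μ ^ 2) * Real.exp (μ * s) := by
        rw [← Real.exp_add]
        exact Real.exp_le_exp.mpr (by linarith)
      calc Real.exp x * y ≤ (Real.exp (2 * μ ^ 2) * Real.exp (μ * s)) * y :=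
            mul_le_mul_of_nonneg_right this hy
        _ = Real.exp (2 * μ ^ 2) * (y * Real.exp (μ * s)) := by ring
    have h2 : 0 < Real.exp (x ^ 2 / (2 * μ ^ 2)) := Real.exp_pos _
    linarith
  · push_neg at hcase
    have hy1 : y ≤ Real.exp (s ^ 2 / 2) := by
      have hel : Real.exp (Real.log (1 + y)) = 1 + y := Real.exp_log (by linarith)
      have : s ^ 2 / 2 = Real.log (1 + y) := by rw [hs2]; ring
      rw [this, hel]; linarith
    have hμ2 : 0 < μ ^ 2 := by positivity
    have hxs : μ * s < x - 2 * μ ^ 2 := by linarith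
    have hsle : s ≤ (x - 2 * μ ^ 2) / μ := by
      rw [le_div_iff₀ hμ]
      nlinarith
    have hkey : x + s ^ 2 / 2 ≤ x ^ 2 / (2 * μ ^ 2) := by
      have hsq : s ^ 2 ≤ ((x - 2 * μ ^ 2) / μ) ^ 2 := by
        apply sq_le_sq' _ hsle
        nlinarith
      have h2μ : 2 * μ ^ 2 ≤ x := by nlinarith
      rw [div_pow] at hsq
      rw [le_div_iff₀ (by positivity : (0:ℝ) < μ ^ 2)] at hsq
      rw [le_div_iff₀ (by positivity : (0:ℝ) < 2 * μ ^ 2)]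
      nlinarith
    have h1 : Real.exp x * y ≤ Real.exp (x ^ 2 / (2 * μ ^ 2)) := by
      calc Real.exp x * y ≤ Real.exp x * Real.exp (s ^ 2 / 2) :=
            mul_le_mul_of_nonneg_left hy1 (Real.exp_pos _).le
        _ = Real.exp (x + s ^ 2 / 2) := (Real.exp_add _ _).symm
        _ ≤ Real.exp (x ^ 2 / (2 * μ ^ 2)) := Real.exp_le_exp.mpr hkey
    have h2 : 0 ≤ Real.exp (2 * μ ^ 2) * (y * Real.exp (μ * s)) := by positivity
    linarith
end

section
/- Let {X_t}_{t∈T} be a family of random variables and Q a family of probability measures on (Ω,F), all equivalent to P, and set E[·] := sup_{Q∈Q} E^Q[·]. Then lim_{N→∞} sup_{t∈T} E[|X_t| 1_{|X_t| ≥ N}] = 0 if and only if both: (a) sup_{t∈T} E[|X_t|] < ∞, and (b) for every ε > 0 there exists δ > 0 such that for every measurable set A with sup_{Q∈Q} Q[A] < δ one has sup_{t∈T} E[|X_t| 1_A] < ε. -/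
open MeasureTheory Filter Set ENNReal

/-!
Splitting at the level `N`, `E[|X| 1_A] ≤ E[|X| 1_{|X| ≥ N}] + N · sup_Q Q[A]`. Taking `A = Ω`
gives (a), and choosing `N` with a small tail first and then `δ ≈ ε / N` gives (b). Conversely,
by Markov's inequality `sup_Q Q[|X_t| ≥ N] ≤ sup_t E[|X_t|] / N`, which is below `δ` for large `N`
uniformly in `t`, so (b) applied to `A = {|X_t| ≥ N}` makes the tails small.
-/

section

variable {Ω : Type*} [MeasurableSpace Ω]

lemma setLIntegral_ofReal_abs_le_tail_add (Q : Measure Ω) (f : Ω → ℝ) (A : Set Ω) (N : ℝ) :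
    ∫⁻ ω in A, ENNReal.ofReal |f ω| ∂Q
      ≤ ∫⁻ ω in {ω | N ≤ |f ω|}, ENNReal.ofReal |f ω| ∂Q + ENNReal.ofReal N * Q A := by
  set B := {ω | N ≤ |f ω|}
  calc ∫⁻ ω in A, ENNReal.ofReal |f ω| ∂Q
      ≤ ∫⁻ ω in B ∪ A \ B, ENNReal.ofReal |f ω| ∂Q :=
        lintegral_mono_set fun ω hω => by by_cases hB : ω ∈ B <;> simp [hω, hB]
    _ ≤ ∫⁻ ω in B, ENNReal.ofReal |f ω| ∂Q + ∫⁻ ω in A \ B, ENNReal.ofReal |f ω| ∂Q :=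
        lintegral_union_le _ _ _
    _ ≤ ∫⁻ ω in B, ENNReal.ofReal |f ω| ∂Q + ∫⁻ _ in A \ B, ENNReal.ofReal N ∂Q :=
        add_le_add le_rfl <| setLIntegral_mono measurable_const fun ω hω =>
          ENNReal.ofReal_le_ofReal (not_le.1 hω.2).le
    _ ≤ ∫⁻ ω in B, ENNReal.ofReal |f ω| ∂Q + ENNReal.ofReal N * Q A := by
        rw [setLIntegral_const]
        gcongr
        exact sdiff_subset

lemma meas_abs_ge_le_lintegral_div (Q : Measure Ω) {f : Ω → ℝ} (hf : Measurable f) {N : ℝ}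
    (hN : 0 < N) :
    Q {ω | N ≤ |f ω|} ≤ (∫⁻ ω, ENNReal.ofReal |f ω| ∂Q) / ENNReal.ofReal N := by
  simp_rw [← ENNReal.ofReal_le_ofReal_iff (abs_nonneg _)]
  exact meas_ge_le_lintegral_div hf.abs.ennreal_ofReal.aemeasurable
    (ENNReal.ofReal_pos.2 hN).ne' ofReal_ne_top

variable {ι : Type*} (𝒬 : Set (Measure Ω)) (X : ι → Ω → ℝ)

lemma iSup_setLIntegral_le_iSup_tail_add (A : Set Ω) (N : ℝ) :
    ⨆ t, ⨆ Q ∈ 𝒬, ∫⁻ ω in A, ENNReal.ofReal |X t ω| ∂Q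
      ≤ (⨆ t, ⨆ Q ∈ 𝒬, ∫⁻ ω in {ω | N ≤ |X t ω|}, ENNReal.ofReal |X t ω| ∂Q)
        + ENNReal.ofReal N * ⨆ Q ∈ 𝒬, Q A :=
  iSup_le fun t => iSup₂_le fun Q hQ =>
    (setLIntegral_ofReal_abs_le_tail_add Q (X t) A N).trans <| by
      gcongr
      · exact le_iSup_of_le t (le_iSup₂_of_le Q hQ le_rfl)
      · exact le_iSup₂_of_le Q hQ le_rfl

variable {𝒬 X}

lemma iSup_lintegral_lt_top_of_tendsto_tail (hbdd : ⨆ Q ∈ 𝒬, Q univ ≠ ⊤)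
    (h : Tendsto (fun N : ℝ => ⨆ t, ⨆ Q ∈ 𝒬,
      ∫⁻ ω in {ω | N ≤ |X t ω|}, ENNReal.ofReal |X t ω| ∂Q) atTop (nhds 0)) :
    ⨆ t, ⨆ Q ∈ 𝒬, ∫⁻ ω, ENNReal.ofReal |X t ω| ∂Q < ⊤ := by
  obtain ⟨N, hN⟩ := (h.eventually (gt_mem_nhds one_pos)).exists
  simpa only [Measure.restrict_univ] using
    (iSup_setLIntegral_le_iSup_tail_add 𝒬 X univ N).trans_lt <|
      ENNReal.add_lt_top.2 ⟨hN.trans one_lt_top, ENNReal.mul_lt_top ofReal_lt_top hbdd.lt_top⟩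

lemma exists_iSup_setLIntegral_lt_of_tendsto_tail
    (h : Tendsto (fun N : ℝ => ⨆ t, ⨆ Q ∈ 𝒬,
      ∫⁻ ω in {ω | N ≤ |X t ω|}, ENNReal.ofReal |X t ω| ∂Q) atTop (nhds 0))
    {ε : ℝ≥0∞} (hε : 0 < ε) :
    ∃ δ : ℝ≥0∞, 0 < δ ∧ ∀ A : Set Ω, (⨆ Q ∈ 𝒬, Q A) < δ →
      (⨆ t, ⨆ Q ∈ 𝒬, ∫⁻ ω in A, ENNReal.ofReal |X t ω| ∂Q) < ε := by
  have hε2 : 0 < ε / 2 := ENNReal.half_pos hε.ne'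
  obtain ⟨N, hN⟩ := (h.eventually (gt_mem_nhds hε2)).exists
  refine ⟨ε / 2 / ENNReal.ofReal N, ENNReal.div_pos hε2.ne' ofReal_ne_top, fun A hA => ?_⟩
  calc _ ≤ _ := iSup_setLIntegral_le_iSup_tail_add 𝒬 X A N
    _ < ε / 2 + ε / 2 := by
        rw [mul_comm]
        exact ENNReal.add_lt_add hN (ENNReal.mul_lt_of_lt_div hA)
    _ = ε := ENNReal.add_halves ε

lemma tendsto_tail_of_iSup_lintegral_ne_top (hmeas : ∀ t, Measurable (X t))
    (hbdd : ⨆ t, ⨆ Q ∈ 𝒬, ∫⁻ ω, ENNReal.ofReal |X t ω| ∂Q ≠ ⊤)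
    (hcont : ∀ ε : ℝ≥0∞, 0 < ε → ∃ δ : ℝ≥0∞, 0 < δ ∧
      ∀ A : Set Ω, MeasurableSet A → (⨆ Q ∈ 𝒬, Q A) < δ →
        (⨆ t, ⨆ Q ∈ 𝒬, ∫⁻ ω in A, ENNReal.ofReal |X t ω| ∂Q) < ε) :
    Tendsto (fun N : ℝ => ⨆ t, ⨆ Q ∈ 𝒬,
      ∫⁻ ω in {ω | N ≤ |X t ω|}, ENNReal.ofReal |X t ω| ∂Q) atTop (nhds 0) := by
  set M := ⨆ t, ⨆ Q ∈ 𝒬, ∫⁻ ω, ENNReal.ofReal |X t ω| ∂Q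
  have hmarkov : Tendsto (fun N : ℝ => M / ENNReal.ofReal N) atTop (nhds 0) := by
    simpa using ENNReal.Tendsto.const_div ENNReal.tendsto_ofReal_atTop (Or.inr hbdd)
  rw [ENNReal.tendsto_nhds_zero]
  intro ε hε
  obtain ⟨δ, hδ, hA⟩ := hcont ε hε
  filter_upwards [hmarkov.eventually (gt_mem_nhds hδ), eventually_gt_atTop 0] with N hNδ hN
  refine iSup_le fun t => ?_
  have hsmall : ⨆ Q ∈ 𝒬, Q {ω | N ≤ |X t ω|} < δ := by
    refine lt_of_le_of_lt (iSup₂_le fun Q hQ => ?_) hNδ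
    refine (meas_abs_ge_le_lintegral_div Q (hmeas t) hN).trans ?_
    gcongr
    exact le_iSup_of_le t (le_iSup₂_of_le Q hQ le_rfl)
  exact (le_iSup (fun s => ⨆ Q ∈ 𝒬, ∫⁻ ω in {ω | N ≤ |X t ω|}, ENNReal.ofReal |X s ω| ∂Q) t).trans
    (hA _ (measurableSet_le measurable_const (hmeas t).abs) hsmall).le

end

theorem uniform_integrability_characterization_general
    {Ω : Type*} {m0 : MeasurableSpace Ω}
    {ι : Type*} (𝒬 : Set (Measure Ω))
    (hprob : ∀ Q ∈ 𝒬, IsProbabilityMeasure Q)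
    (X : ι → Ω → ℝ) (hmeas : ∀ t, Measurable (X t)) :
    Tendsto
      (fun N : ℝ => ⨆ t, ⨆ Q ∈ 𝒬,
        ∫⁻ ω in {ω | N ≤ |X t ω|}, ENNReal.ofReal |X t ω| ∂Q)
      atTop (nhds 0)
    ↔ ((⨆ t, ⨆ Q ∈ 𝒬, ∫⁻ ω, ENNReal.ofReal |X t ω| ∂Q) < ⊤
        ∧ ∀ ε : ℝ≥0∞, 0 < ε → ∃ δ : ℝ≥0∞, 0 < δ ∧
            ∀ A : Set Ω, MeasurableSet A → (⨆ Q ∈ 𝒬, Q A) < δ →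
              (⨆ t, ⨆ Q ∈ 𝒬, ∫⁻ ω in A, ENNReal.ofReal |X t ω| ∂Q) < ε) := by
  have hbdd : ⨆ Q ∈ 𝒬, Q univ ≠ ⊤ :=
    ne_top_of_le_ne_top one_ne_top (iSup₂_le fun Q hQ => (hprob Q hQ).measure_univ.le)
  refine ⟨fun h => ⟨iSup_lintegral_lt_top_of_tendsto_tail hbdd h, fun ε hε => ?_⟩,
    fun ⟨ha, hb⟩ => tendsto_tail_of_iSup_lintegral_ne_top hmeas ha.ne hb⟩
  obtain ⟨δ, hδ, hA⟩ := exists_iSup_setLIntegral_lt_of_tendsto_tail h hε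
  exact ⟨δ, hδ, fun A _ => hA A⟩

/-- **Proposition A.1.** Characterization of uniform integrability under the sublinear
expectation `E[·] = sup_{Q ∈ 𝒬} E^Q[·]` associated with a family `𝒬` of probability measures
all equivalent to `P`:
`lim_N sup_t E[|X_t| 1_{|X_t| ≥ N}] = 0` iff
(a) `sup_t E[|X_t|] < ∞`, and
(b) `∀ ε > 0, ∃ δ > 0` such that `sup_{Q} Q[A] < δ` implies `sup_t E[|X_t| 1_A] < ε`. -/
theorem uniform_integrability_characterization
    {Ω : Type*} {m0 : MeasurableSpace Ω} (P : Measure Ω) [IsProbabilityMeasure P]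
    {ι : Type*} (𝒬 : Set (Measure Ω))
    (hprob : ∀ Q ∈ 𝒬, IsProbabilityMeasure Q)
    (hequiv : ∀ Q ∈ 𝒬, Q ≪ P ∧ P ≪ Q)
    (X : ι → Ω → ℝ) (hmeas : ∀ t, Measurable (X t)) :
    Tendsto
      (fun N : ℝ => ⨆ t, ⨆ Q ∈ 𝒬,
        ∫⁻ ω in {ω | N ≤ |X t ω|}, ENNReal.ofReal |X t ω| ∂Q)
      atTop (nhds 0)
    ↔ ((⨆ t, ⨆ Q ∈ 𝒬, ∫⁻ ω, ENNReal.ofReal |X t ω| ∂Q) < ⊤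
        ∧ ∀ ε : ℝ≥0∞, 0 < ε → ∃ δ : ℝ≥0∞, 0 < δ ∧
            ∀ A : Set Ω, MeasurableSet A → (⨆ Q ∈ 𝒬, Q A) < δ →
              (⨆ t, ⨆ Q ∈ 𝒬, ∫⁻ ω in A, ENNReal.ofReal |X t ω| ∂Q) < ε) :=
  uniform_integrability_characterization_general (m0 := m0) 𝒬 hprob X hmeas
end

section
/- Let Y be a nonnegative measurable process and ζ a nonnegative F_T-measurable random variable such that for some fixed probability measure Q̂ in a family Q that is stable under concatenation, Y_τ ≤ E^{Q̂}[ζ | F_τ] a.s. for every stopping time τ ∈ T_{0,T}. Then sup_{τ∈T_{0,T}} sup_{Q∈Q} E^Q[Y_τ] ≤ sup_{Q∈Q} E^Q[ζ]. -/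
/-!
The concatenation `Q' = Q ⊗_τ Q̂` satisfies `E^{Q'}[f] = E^Q[E^{Q̂}[f | F_τ]]` for every measurable
`f ≥ 0`: for indicators this is its definition, and it extends by linearity and by conditional
monotone convergence, which needs no integrability when stated for the Lebesgue conditional
expectation `Q̂⁻[f|F_τ]`.
Hence `E^Q[Y_τ] ≤ E^Q[E^{Q̂}[ζ | F_τ]] = E^{Q'}[ζ] ≤ sup_{Q ∈ 𝒬} E^Q[ζ]`.
-/

open MeasureTheory Set ENNReal

namespace MeasureTheory

variable {Ω : Type*} {m m0 : MeasurableSpace Ω} {μ ν ν' : Measure Ω}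

theorem ae_monotone_condLExp {f : ℕ → Ω → ℝ≥0∞} (hf : Monotone f) :
    ∀ᵐ ω ∂μ, Monotone fun n => μ⁻[f n|m] ω := by
  filter_upwards [ae_all_iff.2 fun n => condLExp_mono (mΩ := m)
    (ae_of_all μ (hf (Nat.le_succ n)))] with ω hω
  exact monotone_nat_of_le_succ hω

theorem condLExp_iSup (hm : m ≤ m0) [SigmaFinite (μ.trim hm)] {f : ℕ → Ω → ℝ≥0∞}
    (hf : ∀ n, Measurable (f n)) (hf_mono : Monotone f) :
    μ⁻[fun ω => ⨆ n, f n ω|m] =ᵐ[μ] fun ω => ⨆ n, μ⁻[f n|m] ω := by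
  refine (ae_eq_condLExp hm μ _ (Measurable.iSup fun n => measurable_condLExp m μ (f n))
    fun s hs => ?_).symm
  rw [lintegral_iSup' (fun n => (measurable_condLExp' m μ (f n)).aemeasurable)
    (ae_restrict_of_ae (ae_monotone_condLExp hf_mono)),
    lintegral_iSup hf hf_mono]
  exact iSup_congr fun n => setLIntegral_condLExp hm μ (f n) hs

/-- `ν'` is the concatenation `ν ⊗_m μ`: it agrees with `ν` on `m`, and given `m` it is
distributed according to `μ`. -/
def IsConcatenation (m : MeasurableSpace Ω) (ν μ ν' : Measure[m0] Ω) : Prop :=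
  ∀ A, MeasurableSet[m0] A → ν' A = ∫⁻ ω, μ⁻[A.indicator 1|m] ω ∂ν

theorem isConcatenation_of_condExp [IsFiniteMeasure μ] (hνμ : ν ≪ μ)
    (h : ∀ A, MeasurableSet A →
      ν' A = ∫⁻ ω, ENNReal.ofReal ((μ[A.indicator (fun _ => (1 : ℝ))|m]) ω) ∂ν) :
    IsConcatenation m ν μ ν' := by
  intro A hA
  have hofReal : (fun ω => ENNReal.ofReal (A.indicator (fun _ => (1 : ℝ)) ω)) = A.indicator 1 := by
    funext ω
    by_cases hω : ω ∈ A <;> simp [hω]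
  have hcond := condLExp_ofReal m (μ := μ) ((integrable_const (1 : ℝ)).indicator hA)
    (ae_of_all _ fun ω => Set.indicator_nonneg (fun _ _ => zero_le_one) ω)
  rw [hofReal] at hcond
  rw [h A hA]
  exact lintegral_congr_ae (hνμ.ae_le hcond.symm)

theorem IsConcatenation.lintegral_eq (hm : m ≤ m0) [SigmaFinite (μ.trim hm)]
    (hcat : IsConcatenation m ν μ ν') (hνμ : ν ≪ μ) {f : Ω → ℝ≥0∞} (hf : Measurable f) :
    ∫⁻ ω, f ω ∂ν' = ∫⁻ ω, μ⁻[f|m] ω ∂ν := by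
  refine Measurable.ennreal_induction
    (motive := fun f => ∫⁻ ω, f ω ∂ν' = ∫⁻ ω, μ⁻[f|m] ω ∂ν) ?_ ?_ ?_ hf
  · intro c A hA
    have hsmul : A.indicator (fun _ => c) = c • A.indicator (1 : Ω → ℝ≥0∞) := by
      funext ω
      by_cases hω : ω ∈ A <;> simp [hω]
    rw [lintegral_indicator_const hA, hcat A hA, hsmul, lintegral_congr_ae
      (hνμ.ae_le (condLExp_smul _ ((measurable_one.indicator hA).aemeasurable) c))]
    exact (lintegral_const_mul c (measurable_condLExp' m μ _)).symm
  · intro f g _ hf _ ihf ihg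
    rw [lintegral_congr_ae (hνμ.ae_le (condLExp_add_left g hf.aemeasurable))]
    simp only [Pi.add_apply]
    rw [lintegral_add_left hf, lintegral_add_left (measurable_condLExp' m μ f), ihf, ihg]
  · intro f hf hf_mono ihf
    rw [lintegral_congr_ae (hνμ.ae_le (condLExp_iSup hm hf hf_mono)), lintegral_iSup hf hf_mono,
      lintegral_iSup' (fun n => (measurable_condLExp' m μ _).aemeasurable)
        (hνμ.ae_le (ae_monotone_condLExp hf_mono))]
    exact iSup_congr ihf

end MeasureTheory

theorem sup_stopped_le_of_condexp_dominated_general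
    {Ω : Type*} {m0 : MeasurableSpace Ω} (P : Measure Ω)
    (ℱ : Filtration ℝ m0) (T : ℝ)
    (𝒬 : Set (Measure Ω))
    (hprob : ∀ Q ∈ 𝒬, IsProbabilityMeasure Q)
    (hequiv : ∀ Q ∈ 𝒬, Q ≪ P ∧ P ≪ Q)
    (Qhat : Measure Ω) (hQhat : Qhat ∈ 𝒬)
    (Y : ℝ → Ω → ℝ)
    (ζ : Ω → ℝ) (hζpos : ∀ ω, 0 ≤ ζ ω) (hζmeas : Measurable ζ)
    (hζint : Integrable ζ Qhat)
    (hconcat : ∀ Q ∈ 𝒬, ∀ (τ : Ω → ℝ) (hτ : IsStoppingTime ℱ (fun ω => (τ ω : WithTop ℝ))),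
      (∀ ω, τ ω ∈ Icc 0 T) →
      ∃ Q' ∈ 𝒬, ∀ A : Set Ω, MeasurableSet A →
        Q' A = ∫⁻ ω, ENNReal.ofReal
          ((Qhat[A.indicator (fun _ => (1 : ℝ)) | hτ.measurableSpace]) ω) ∂Q)
    (hdom : ∀ (τ : Ω → ℝ) (hτ : IsStoppingTime ℱ (fun ω => (τ ω : WithTop ℝ))), (∀ ω, τ ω ∈ Icc 0 T) →
      ∀ᵐ ω ∂Qhat, Y (τ ω) ω ≤ (Qhat[ζ | hτ.measurableSpace]) ω) :
    ∀ C : ℝ≥0∞, (∀ Q ∈ 𝒬, ∫⁻ ω, ENNReal.ofReal (ζ ω) ∂Q ≤ C) →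
      ∀ (τ : Ω → ℝ), IsStoppingTime ℱ (fun ω => (τ ω : WithTop ℝ)) → (∀ ω, τ ω ∈ Icc 0 T) →
      ∀ Q ∈ 𝒬, ∫⁻ ω, ENNReal.ofReal (Y (τ ω) ω) ∂Q ≤ C := by
  intro C hC τ hτ hτT Q hQ
  have := hprob Qhat hQhat
  obtain ⟨Q', hQ', hQ'_eq⟩ := hconcat Q hQ τ hτ hτT
  have hQ_ac : Q ≪ Qhat := (hequiv Q hQ).1.trans (hequiv Qhat hQhat).2
  have hcat : IsConcatenation hτ.measurableSpace Q Qhat Q' :=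
    isConcatenation_of_condExp hQ_ac hQ'_eq
  calc ∫⁻ ω, ENNReal.ofReal (Y (τ ω) ω) ∂Q
      ≤ ∫⁻ ω, ENNReal.ofReal ((Qhat[ζ | hτ.measurableSpace]) ω) ∂Q :=
        lintegral_mono_ae (hQ_ac.ae_le ((hdom τ hτ hτT).mono fun _ h => ofReal_le_ofReal h))
    _ = ∫⁻ ω, Qhat⁻[fun ω => ENNReal.ofReal (ζ ω) | hτ.measurableSpace] ω ∂Q :=
        lintegral_congr_ae (hQ_ac.ae_le (condLExp_ofReal _ hζint (ae_of_all _ hζpos)).symm)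
    _ = ∫⁻ ω, ENNReal.ofReal (ζ ω) ∂Q' :=
        (hcat.lintegral_eq hτ.measurableSpace_le hQ_ac hζmeas.ennreal_ofReal).symm
    _ ≤ C := hC Q' hQ'

/-- **Lemma 4.2 (techLemma1).** Let `𝒬` be a family of probability measures equivalent to `P`
which is stable under concatenation at stopping times (for `Q ∈ 𝒬` and a `[0,T]`-valued
stopping time `τ`, the concatenated measure `Q ⊗_τ Q̂`, defined on sets by
`(Q ⊗_τ Q̂)(A) = E^Q[E^{Q̂}[1_A | F_τ]]`, again belongs to `𝒬`).  Let `ζ ≥ 0` be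
`F_T`-measurable and `Y ≥ 0` a process such that `Y_τ ≤ E^{Q̂}[ζ | F_τ]` a.s. for some fixed
`Q̂ ∈ 𝒬` and every stopping time `τ ∈ T_{0,T}`.  Then
`sup_τ sup_{Q ∈ 𝒬} E^Q[Y_τ] ≤ sup_{Q ∈ 𝒬} E^Q[ζ]`
(equivalently: every upper bound `C` of `{E^Q[ζ]}` dominates every `E^Q[Y_τ]`). -/
theorem sup_stopped_le_of_condexp_dominated
    {Ω : Type*} {m0 : MeasurableSpace Ω} (P : Measure Ω) [IsProbabilityMeasure P]
    (ℱ : Filtration ℝ m0) (T : ℝ) (hT : 0 < T)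
    (𝒬 : Set (Measure Ω))
    (hprob : ∀ Q ∈ 𝒬, IsProbabilityMeasure Q)
    (hequiv : ∀ Q ∈ 𝒬, Q ≪ P ∧ P ≪ Q)
    (Qhat : Measure Ω) (hQhat : Qhat ∈ 𝒬)
    (Y : ℝ → Ω → ℝ) (hYpos : ∀ t ω, 0 ≤ Y t ω)
    (hYmeas : ∀ t, Measurable (Y t))
    (ζ : Ω → ℝ) (hζpos : ∀ ω, 0 ≤ ζ ω) (hζmeas : Measurable ζ)
    (hζint : Integrable ζ Qhat)
    (hconcat : ∀ Q ∈ 𝒬, ∀ (τ : Ω → ℝ) (hτ : IsStoppingTime ℱ (fun ω => (τ ω : WithTop ℝ))),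
      (∀ ω, τ ω ∈ Icc 0 T) →
      ∃ Q' ∈ 𝒬, ∀ A : Set Ω, MeasurableSet A →
        Q' A = ∫⁻ ω, ENNReal.ofReal
          ((Qhat[A.indicator (fun _ => (1 : ℝ)) | hτ.measurableSpace]) ω) ∂Q)
    (hdom : ∀ (τ : Ω → ℝ) (hτ : IsStoppingTime ℱ (fun ω => (τ ω : WithTop ℝ))), (∀ ω, τ ω ∈ Icc 0 T) →
      ∀ᵐ ω ∂Qhat, Y (τ ω) ω ≤ (Qhat[ζ | hτ.measurableSpace]) ω) :
    ∀ C : ℝ≥0∞, (∀ Q ∈ 𝒬, ∫⁻ ω, ENNReal.ofReal (ζ ω) ∂Q ≤ C) →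
      ∀ (τ : Ω → ℝ), IsStoppingTime ℱ (fun ω => (τ ω : WithTop ℝ)) → (∀ ω, τ ω ∈ Icc 0 T) →
      ∀ Q ∈ 𝒬, ∫⁻ ω, ENNReal.ofReal (Y (τ ω) ω) ∂Q ≤ C :=
  sup_stopped_le_of_condexp_dominated_general P ℱ T 𝒬 hprob hequiv Qhat hQhat Y ζ hζpos hζmeas hζint
    hconcat hdom
end

section
/- The space D of adapted càdlàg processes Y on [0,T] with ‖Y‖_D := sup_{τ∈T_{0,T}} sup_{Q∈Q} E^Q[|Y_τ|] < ∞ and which are uniformly integrable under Q (i.e. lim_{N→∞} sup_{τ} sup_{Q∈Q} E^Q[|Y_τ|1_{|Y_τ|≥N}] = 0) is complete with respect to the norm ‖·‖_D. -/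
open MeasureTheory Filter Set ENNReal

variable {Ω : Type*} {m0 : MeasurableSpace Ω}

/-- The `[0,T]`-valued stopping times of the filtration `ℱ`. -/
def STimes (ℱ : Filtration ℝ m0) (T : ℝ) : Type _ :=
  {τ : Ω → ℝ // IsStoppingTime ℱ (fun ω => (τ ω : WithTop ℝ)) ∧ ∀ ω, τ ω ∈ Set.Icc 0 T}

/-- The norm `‖Y‖_𝒟 = sup_{τ ∈ T_{0,T}} sup_{Q ∈ 𝒬} E^Q[|Y_τ|]`. -/
noncomputable def Dnorm (𝒬 : Set (Measure Ω)) (ℱ : Filtration ℝ m0) (T : ℝ)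
    (Y : ℝ → Ω → ℝ) : ℝ≥0∞ :=
  ⨆ τ : STimes ℱ T, ⨆ Q ∈ 𝒬, ∫⁻ ω, ENNReal.ofReal |Y (τ.1 ω) ω| ∂Q

/-- Uniform integrability of `{Y_τ}` under the family `𝒬`:
`lim_N sup_τ sup_{Q∈𝒬} E^Q[|Y_τ| 1_{|Y_τ| ≥ N}] = 0`. -/
def DUnifIntegrable (𝒬 : Set (Measure Ω)) (ℱ : Filtration ℝ m0) (T : ℝ)
    (Y : ℝ → Ω → ℝ) : Prop :=
  Tendsto
    (fun N : ℝ => ⨆ τ : STimes ℱ T, ⨆ Q ∈ 𝒬,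
      ∫⁻ ω in {ω | N ≤ |Y (τ.1 ω) ω|}, ENNReal.ofReal |Y (τ.1 ω) ω| ∂Q)
    atTop (nhds 0)

/-- Càdlàg paths: right-continuous with left limits. -/
def IsCadlag (Y : ℝ → Ω → ℝ) : Prop :=
  ∀ ω, (∀ t, ContinuousWithinAt (fun s => Y s ω) (Set.Ici t) t) ∧
    ∀ t, ∃ l : ℝ, Tendsto (fun s => Y s ω) (nhdsWithin t (Set.Iio t)) (nhds l)

/-! Pass to a subsequence with `‖Y^{k+1} - Y^k‖_𝒟 ≤ 8^{-k}`. Evaluating `Y^{k+1} - Y^k` at the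
first time in a finite set of rational times where it exceeds `2^{-k}`, and using
right-continuity, gives the maximal inequality `μ(sup_{[0,T]} |Y^{k+1} - Y^k| > 2^{-k}) ≤ 4^{-k}`.
By Borel–Cantelli almost every path converges uniformly on `[0,T]`, so the limit is càdlàg; it is
adapted because every `ℱ t` contains the `μ`-null sets. Fatou's lemma at each stopping time turns
the Cauchy property into convergence in `‖·‖_𝒟`, and uniform integrability passes to the limit
by splitting `{|Y_τ| ≥ N}` according to whether `|Y^n_τ - Y_τ|` or `|Y^n_τ|` exceeds `N/2`. -/

open Topology

def IsCadlagPath (f : ℝ → ℝ) : Prop :=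
  (∀ t, ContinuousWithinAt f (Ici t) t) ∧ ∀ t, ∃ l : ℝ, Tendsto f (𝓝[<] t) (𝓝 l)

theorem isCadlag_iff_forall_isCadlagPath {Y : ℝ → Ω → ℝ} :
    IsCadlag Y ↔ ∀ ω, IsCadlagPath fun s => Y s ω := Iff.rfl

theorem TendstoUniformly.exists_tendsto {α β : Type*} [PseudoMetricSpace β] [CompleteSpace β]
    {F : ℕ → α → β} {f : α → β} {l : Filter α} [l.NeBot] (hF : TendstoUniformly F f atTop)
    (hlim : ∀ k, ∃ y, Tendsto (F k) l (𝓝 y)) : ∃ y, Tendsto f l (𝓝 y) := by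
  rw [← cauchy_map_iff_exists_tendsto, Metric.cauchy_iff]
  refine ⟨inferInstance, fun ε hε => ?_⟩
  obtain ⟨k, hk⟩ := (Metric.tendstoUniformly_iff.1 hF (ε / 4) (by positivity)).exists
  obtain ⟨y, hy⟩ := hlim k
  refine ⟨f '' (F k ⁻¹' Metric.ball y (ε / 4)),
    image_mem_map (hy (Metric.ball_mem_nhds y (by positivity))), ?_⟩
  rintro _ ⟨a, ha, rfl⟩ _ ⟨b, hb, rfl⟩
  have ha' := hk a
  have hb' := hk b
  rw [mem_preimage, Metric.mem_ball] at ha hb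
  calc dist (f a) (f b) ≤ dist (f a) (F k a) + dist (F k a) (F k b) + dist (F k b) (f b) :=
        dist_triangle4 _ _ _ _
    _ ≤ dist (f a) (F k a) + (dist (F k a) y + dist (F k b) y) + dist (f b) (F k b) := by
        gcongr
        · exact dist_triangle_right _ _ _
        · exact (dist_comm _ _).le
    _ < ε / 4 + (ε / 4 + ε / 4) + ε / 4 := by gcongr
    _ = ε := by ring

theorem IsCadlagPath.of_tendstoUniformly {F : ℕ → ℝ → ℝ} {f : ℝ → ℝ}
    (hF : ∀ k, IsCadlagPath (F k)) (hlim : TendstoUniformly F f atTop) : IsCadlagPath f := by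
  refine ⟨fun t => ?_, fun t => ?_⟩
  · refine continuousWithinAt_of_locally_uniform_approx_of_continuousWithinAt self_mem_Ici
      fun u hu => ?_
    obtain ⟨k, hk⟩ := (hlim u hu).exists
    exact ⟨univ, univ_mem, F k, (hF k).1 t, fun y _ => hk y⟩
  · exact hlim.exists_tendsto fun k => (hF k).2 t

-- Setting the path to `0` before time `0` keeps the frozen limit adapted: `ℱ t` for `t < 0` need
-- not contain `ℱ 0`.
noncomputable def freeze {β : Type*} [Zero β] (T : ℝ) (f : ℝ → β) (t : ℝ) : β :=
  if t < 0 then 0 else f (min t T)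

theorem freeze_of_mem_Icc {β : Type*} [Zero β] {T t : ℝ} (f : ℝ → β) (ht : t ∈ Icc 0 T) :
    freeze T f t = f t := by
  rw [_root_.freeze, if_neg (not_lt.2 ht.1), min_eq_left ht.2]

theorem IsCadlagPath.freeze {f : ℝ → ℝ} (hf : IsCadlagPath f) (T : ℝ) :
    IsCadlagPath (freeze T f) := by
  refine ⟨fun t => ?_, fun t => ?_⟩
  · rcases lt_or_ge t 0 with ht | ht
    · refine (continuousWithinAt_const (b := (0 : ℝ))).congr_of_eventuallyEq ?_ (if_pos ht)
      filter_upwards [mem_nhdsWithin_of_mem_nhds (Iio_mem_nhds ht)] with s hs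
      exact if_pos hs
    · have hmin : ContinuousWithinAt (fun s => f (min s T)) (Ici t) t :=
        (hf.1 (min t T)).comp (f := fun s => min s T)
          (continuous_id.min continuous_const).continuousWithinAt
          fun s (hs : t ≤ s) => min_le_min_right T hs
      exact hmin.congr (fun s hs => if_neg (not_lt.2 (ht.trans hs))) (if_neg (not_lt.2 ht))
  · rcases le_or_gt t 0 with ht | ht
    · refine ⟨0, tendsto_const_nhds.congr' ?_⟩
      filter_upwards [self_mem_nhdsWithin] with s hs
      exact (if_pos (lt_of_lt_of_le hs ht)).symm
    rcases lt_or_ge T t with hTt | htT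
    · refine ⟨f T, tendsto_const_nhds.congr' ?_⟩
      filter_upwards [mem_nhdsWithin_of_mem_nhds (Ioi_mem_nhds (max_lt ht hTt))] with s hs
      rw [_root_.freeze, if_neg (not_lt.2 (le_max_left _ _ |>.trans hs.le)),
        min_eq_right (le_max_right _ _ |>.trans hs.le)]
    · obtain ⟨l, hl⟩ := hf.2 t
      refine ⟨l, hl.congr' ?_⟩
      filter_upwards [Ioo_mem_nhdsLT ht] with s hs
      exact (freeze_of_mem_Icc f ⟨hs.1.le, hs.2.le.trans htT⟩).symm

theorem TendstoUniformlyOn.freeze {α : Type*} {F : α → ℝ → ℝ} {f : ℝ → ℝ} {p : Filter α}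
    {T : ℝ} (hT : 0 ≤ T) (h : TendstoUniformlyOn F f p (Icc 0 T)) :
    TendstoUniformly (fun k => freeze T (F k)) (freeze T f) p := by
  intro u hu
  filter_upwards [h u hu] with k hk t
  rcases lt_or_ge t 0 with ht | ht
  · simp only [_root_.freeze, if_pos ht]
    exact refl_mem_uniformity hu
  · simp only [_root_.freeze, if_neg (not_lt.2 ht)]
    exact hk _ ⟨le_min ht hT, min_le_right _ _⟩

theorem tendstoUniformlyOn_limUnder_of_dist_le_geometric {α β : Type*} [PseudoMetricSpace β]
    [CompleteSpace β] [Nonempty β] {F : ℕ → α → β} {s : Set α} {r : ℝ} (hr₀ : 0 ≤ r)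
    (hr : r < 1) {K : ℕ} (h : ∀ k, K ≤ k → ∀ x ∈ s, dist (F k x) (F (k + 1) x) ≤ r ^ k) :
    TendstoUniformlyOn F (fun x => limUnder atTop fun k => F k x) atTop s := by
  have hshift : ∀ x ∈ s, ∀ n, dist (F (n + K) x) (F (n + 1 + K) x) ≤ r ^ K * r ^ n := by
    intro x hx n
    rw [← pow_add, add_comm K, add_right_comm]
    exact h _ le_add_self x hx
  have hbound : ∀ x ∈ s, ∀ n, dist (F (n + K) x) (limUnder atTop fun k => F k x) ≤
      r ^ K * r ^ n / (1 - r) := by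
    intro x hx n
    obtain ⟨y, hy⟩ := cauchySeq_tendsto_of_complete (cauchySeq_of_le_geometric _ _ hr (hshift x hx))
    have hlim := tendsto_nhds_limUnder ⟨y, (tendsto_add_atTop_iff_nat (f := fun k => F k x) K).1 hy⟩
    exact dist_le_of_le_geometric_of_tendsto _ _ hr (hshift x hx)
      ((tendsto_add_atTop_iff_nat K).2 hlim) n
  have hsmall : Tendsto (fun n => r ^ K * r ^ n / (1 - r)) atTop (𝓝 0) := by
    simpa using ((tendsto_pow_atTop_nhds_zero_of_lt_one hr₀ hr).const_mul (r ^ K)).div_const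
      (1 - r)
  rw [Metric.tendstoUniformlyOn_iff]
  intro ε hε
  obtain ⟨N, hN⟩ := eventually_atTop.1 (hsmall.eventually (gt_mem_nhds hε))
  filter_upwards [eventually_ge_atTop (N + K)] with k hk x hx
  obtain ⟨n, rfl⟩ : ∃ n, k = n + K := ⟨k - K, by omega⟩
  rw [dist_comm]
  exact (hbound x hx n).trans_lt (hN n (by omega))

def ratGrid (T : ℝ) : Set ℝ := insert T (Icc 0 T ∩ range ((↑) : ℚ → ℝ))

theorem ratGrid_countable (T : ℝ) : (ratGrid T).Countable :=
  ((countable_range _).mono inter_subset_right).insert T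

theorem ratGrid_subset_Icc {T : ℝ} (hT : 0 ≤ T) : ratGrid T ⊆ Icc 0 T :=
  insert_subset ⟨hT, le_rfl⟩ inter_subset_left

theorem exists_mem_ratGrid_of_continuousWithinAt {f : ℝ → ℝ} {U : Set ℝ} (hU : IsOpen U)
    {t T : ℝ} (hf : ContinuousWithinAt f (Ici t) t) (ht : t ∈ Icc 0 T) (hft : f t ∈ U) :
    ∃ s ∈ ratGrid T, f s ∈ U := by
  rcases ht.2.eq_or_lt with rfl | htT
  · exact ⟨t, mem_insert _ _, hft⟩
  have hlt : ∀ᶠ s in 𝓝[>] t, s < T := mem_nhdsWithin_of_mem_nhds (Iio_mem_nhds htT)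
  have hev : ∀ᶠ s in 𝓝[>] t, s < T ∧ f s ∈ U :=
    hlt.and ((hf.mono Ioi_subset_Ici_self).eventually (hU.mem_nhds hft))
  obtain ⟨u, htu, hsub⟩ := mem_nhdsGT_iff_exists_Ioo_subset.1 hev
  obtain ⟨q, htq, hqu⟩ := exists_rat_btwn (mem_Ioi.1 htu)
  obtain ⟨hqT, hqU⟩ := hsub ⟨htq, hqu⟩
  exact ⟨q, mem_insert_of_mem _ ⟨⟨ht.1.trans htq.le, hqT.le⟩, q, rfl⟩, hqU⟩

theorem measurable_stopped_of_rightCts {Z : ℝ → Ω → ℝ}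
    (hZ : ∀ t, Measurable (Z t)) (hrc : ∀ ω t, ContinuousWithinAt (fun s => Z s ω) (Ici t) t)
    {τ : Ω → ℝ} (hτ : Measurable τ) : Measurable fun ω => Z (τ ω) ω := by
  set τn : ℕ → Ω → ℝ := fun n ω => (⌈τ ω * 2 ^ n⌉ : ℝ) / 2 ^ n
  have hτn_ge : ∀ n ω, τ ω ≤ τn n ω := fun n ω => by
    rw [le_div_iff₀ (by positivity)]
    exact Int.le_ceil _
  have hτn_le : ∀ n ω, τn n ω ≤ τ ω + (2 ^ n)⁻¹ := fun n ω => by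
    rw [div_le_iff₀ (by positivity), add_mul, inv_mul_cancel₀ (by positivity)]
    exact (Int.ceil_lt_add_one _).le
  have hmeas : ∀ n, Measurable fun ω => Z (τn n ω) ω := fun n =>
    (measurable_from_prod_countable_left (f := fun p : Ω × ℤ => Z (p.2 / 2 ^ n) p.1)
      fun k => hZ ((k : ℝ) / 2 ^ n)).comp (measurable_id.prodMk (hτ.mul_const _).ceil)
  refine measurable_of_tendsto_metrizable hmeas (tendsto_pi_nhds.2 fun ω => ?_)
  have hlim : Tendsto (fun n => τn n ω) atTop (𝓝[≥] τ ω) := by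
    refine tendsto_nhdsWithin_of_tendsto_nhds_of_eventually_within _ ?_
      (Eventually.of_forall fun n => hτn_ge n ω)
    refine tendsto_of_tendsto_of_tendsto_of_le_of_le tendsto_const_nhds ?_ (hτn_ge · ω)
      (hτn_le · ω)
    have hinv : Tendsto (fun n : ℕ => ((2 : ℝ) ^ n)⁻¹) atTop (𝓝 0) :=
      tendsto_inv_atTop_zero.comp (tendsto_pow_atTop_atTop_of_one_lt one_lt_two)
    simpa using tendsto_const_nhds.add hinv
  exact (hrc ω (τ ω)).tendsto.comp hlim

theorem ofReal_abs_le_ofReal_abs_sub_add (a b : ℝ) :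
    ENNReal.ofReal |b| ≤ ENNReal.ofReal |a - b| + ENNReal.ofReal |a| := by
  rw [← ENNReal.ofReal_add (abs_nonneg _) (abs_nonneg _)]
  refine ENNReal.ofReal_le_ofReal ?_
  have := abs_sub_abs_le_abs_sub b a
  rw [abs_sub_comm] at this
  linarith

theorem setLIntegral_ofReal_abs_le {Q : Measure Ω} {f : Ω → ℝ}
    (hf : Measurable f) (s : Set Ω) (M : ℝ) :
    ∫⁻ ω in s, ENNReal.ofReal |f ω| ∂Q ≤
      ENNReal.ofReal M * Q s + ∫⁻ ω in {ω | M ≤ |f ω|}, ENNReal.ofReal |f ω| ∂Q := by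
  have htail : MeasurableSet {ω | M ≤ |f ω|} := measurableSet_le measurable_const hf.abs
  have hpt : ∀ ω, ENNReal.ofReal |f ω| ≤
      ENNReal.ofReal M + {ω | M ≤ |f ω|}.indicator (fun ω => ENNReal.ofReal |f ω|) ω := by
    intro ω
    by_cases hM : M ≤ |f ω|
    · rw [indicator_of_mem (s := {ω | M ≤ |f ω|}) hM]
      exact le_add_self
    · rw [indicator_of_notMem (s := {ω | M ≤ |f ω|}) hM, add_zero]
      exact ENNReal.ofReal_le_ofReal (not_le.1 hM).le
  calc ∫⁻ ω in s, ENNReal.ofReal |f ω| ∂Q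
      ≤ ∫⁻ ω in s, (ENNReal.ofReal M +
          {ω | M ≤ |f ω|}.indicator (fun ω => ENNReal.ofReal |f ω|) ω) ∂Q := lintegral_mono hpt
    _ = ENNReal.ofReal M * Q s +
          ∫⁻ ω in s, {ω | M ≤ |f ω|}.indicator (fun ω => ENNReal.ofReal |f ω|) ω ∂Q := by
        rw [lintegral_add_left measurable_const, setLIntegral_const]
    _ ≤ ENNReal.ofReal M * Q s +
          ∫⁻ ω, {ω | M ≤ |f ω|}.indicator (fun ω => ENNReal.ofReal |f ω|) ω ∂Q := by
        gcongr
        exact Measure.restrict_le_self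
    _ = _ := by rw [lintegral_indicator htail]

theorem setLIntegral_ofReal_abs_le_of_sub {Q : Measure Ω} {f g : Ω → ℝ}
    (hf : Measurable f) (hg : Measurable g) {M N : ℝ} (hM : 2 * M ≤ N) :
    ∫⁻ ω in {ω | N ≤ |g ω|}, ENNReal.ofReal |g ω| ∂Q ≤
      2 * ∫⁻ ω, ENNReal.ofReal |f ω - g ω| ∂Q +
        ∫⁻ ω in {ω | M ≤ |f ω|}, ENNReal.ofReal |f ω| ∂Q +
        ∫⁻ ω in {ω | N / 2 ≤ |f ω|}, ENNReal.ofReal |f ω| ∂Q := by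
  set d := ∫⁻ ω, ENNReal.ofReal |f ω - g ω| ∂Q
  have hsplit : {ω | N ≤ |g ω|} ⊆ {ω | N / 2 ≤ |f ω - g ω|} ∪ {ω | N / 2 ≤ |f ω|} := by
    intro ω hω
    by_contra hcon
    simp only [mem_union, mem_ofPred_eq, not_or, not_le] at hω hcon
    linarith [abs_sub_abs_le_abs_sub (g ω) (f ω), abs_sub_comm (g ω) (f ω)]
  have hmarkov : ENNReal.ofReal M * Q {ω | N / 2 ≤ |f ω - g ω|} ≤ d := by
    calc ENNReal.ofReal M * Q {ω | N / 2 ≤ |f ω - g ω|}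
        ≤ ENNReal.ofReal (N / 2) *
            Q {ω | ENNReal.ofReal (N / 2) ≤ ENNReal.ofReal |f ω - g ω|} := by
          gcongr
          · linarith
          · exact ENNReal.ofReal_le_ofReal
      _ ≤ d := mul_meas_ge_le_lintegral₀ (hf.sub hg).abs.ennreal_ofReal.aemeasurable _
  calc ∫⁻ ω in {ω | N ≤ |g ω|}, ENNReal.ofReal |g ω| ∂Q
      ≤ ∫⁻ ω in {ω | N ≤ |g ω|}, (ENNReal.ofReal |f ω - g ω| + ENNReal.ofReal |f ω|) ∂Q :=
        lintegral_mono fun ω => ofReal_abs_le_ofReal_abs_sub_add _ _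
    _ ≤ d + ∫⁻ ω in {ω | N ≤ |g ω|}, ENNReal.ofReal |f ω| ∂Q := by
        rw [lintegral_add_right _ hf.abs.ennreal_ofReal]
        gcongr
        exact setLIntegral_le_lintegral _ _
    _ ≤ d + (∫⁻ ω in {ω | N / 2 ≤ |f ω - g ω|}, ENNReal.ofReal |f ω| ∂Q +
          ∫⁻ ω in {ω | N / 2 ≤ |f ω|}, ENNReal.ofReal |f ω| ∂Q) := by
        gcongr
        exact (lintegral_mono_set hsplit).trans (lintegral_union_le _ _ _)
    _ ≤ d + (d + ∫⁻ ω in {ω | M ≤ |f ω|}, ENNReal.ofReal |f ω| ∂Q +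
          ∫⁻ ω in {ω | N / 2 ≤ |f ω|}, ENNReal.ofReal |f ω| ∂Q) := by
        gcongr
        exact (setLIntegral_ofReal_abs_le hf _ M).trans (by gcongr)
    _ = _ := by ring

section Processes

variable {𝒬 : Set (Measure Ω)} {ℱ : Filtration ℝ m0} {T : ℝ}

theorem STimes.measurable (τ : STimes ℱ T) : Measurable τ.1 :=
  measurable_of_Iic fun t => ℱ.le t _ <| by
    change MeasurableSet[ℱ t] {ω | τ.1 ω ≤ t}
    simpa only [WithTop.coe_le_coe] using τ.2.1 t

theorem IsCadlag.measurable_stopped {Z : ℝ → Ω → ℝ} (hc : IsCadlag Z) (hZ : Adapted ℱ Z)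
    (τ : STimes ℱ T) : Measurable fun ω => Z (τ.1 ω) ω :=
  measurable_stopped_of_rightCts (fun t => (hZ t).mono (ℱ.le t) le_rfl) (fun ω => (hc ω).1)
    τ.measurable

theorem dnorm_le_iff {Z : ℝ → Ω → ℝ} {a : ℝ≥0∞} :
    Dnorm 𝒬 ℱ T Z ≤ a ↔
      ∀ τ : STimes ℱ T, ∀ Q ∈ 𝒬, ∫⁻ ω, ENNReal.ofReal |Z (τ.1 ω) ω| ∂Q ≤ a := by
  simp only [Dnorm, iSup_le_iff]

theorem lintegral_le_dnorm (τ : STimes ℱ T) {Q : Measure Ω} (hQ : Q ∈ 𝒬) (Z : ℝ → Ω → ℝ) :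
    ∫⁻ ω, ENNReal.ofReal |Z (τ.1 ω) ω| ∂Q ≤ Dnorm 𝒬 ℱ T Z :=
  dnorm_le_iff.1 le_rfl τ Q hQ

theorem dnorm_le_dnorm_sub_add {X Y : ℝ → Ω → ℝ}
    (hX : ∀ τ : STimes ℱ T, Measurable fun ω => X (τ.1 ω) ω) :
    Dnorm 𝒬 ℱ T Y ≤ Dnorm 𝒬 ℱ T (fun t ω => X t ω - Y t ω) + Dnorm 𝒬 ℱ T X := by
  refine dnorm_le_iff.2 fun τ Q hQ => ?_
  calc ∫⁻ ω, ENNReal.ofReal |Y (τ.1 ω) ω| ∂Q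
      ≤ ∫⁻ ω, (ENNReal.ofReal |X (τ.1 ω) ω - Y (τ.1 ω) ω| + ENNReal.ofReal |X (τ.1 ω) ω|) ∂Q :=
        lintegral_mono fun ω => ofReal_abs_le_ofReal_abs_sub_add _ _
    _ = ∫⁻ ω, ENNReal.ofReal |X (τ.1 ω) ω - Y (τ.1 ω) ω| ∂Q +
          ∫⁻ ω, ENNReal.ofReal |X (τ.1 ω) ω| ∂Q :=
        lintegral_add_right _ (hX τ).abs.ennreal_ofReal
    _ ≤ _ := add_le_add (lintegral_le_dnorm τ hQ _) (lintegral_le_dnorm τ hQ _)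

theorem dnorm_sub_le_liminf {Z Y : ℝ → Ω → ℝ} {X : ℕ → ℝ → Ω → ℝ}
    (hZ : ∀ τ : STimes ℱ T, Measurable fun ω => Z (τ.1 ω) ω)
    (hX : ∀ k, ∀ τ : STimes ℱ T, Measurable fun ω => X k (τ.1 ω) ω)
    (hlim : ∀ Q ∈ 𝒬, ∀ᵐ ω ∂Q, ∀ t ∈ Icc 0 T,
      Tendsto (fun k => X k t ω) atTop (𝓝 (Y t ω))) :
    Dnorm 𝒬 ℱ T (fun t ω => Z t ω - Y t ω) ≤
      liminf (fun k => Dnorm 𝒬 ℱ T (fun t ω => Z t ω - X k t ω)) atTop := by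
  refine dnorm_le_iff.2 fun τ Q hQ => ?_
  have hpt : ∀ᵐ ω ∂Q, ENNReal.ofReal |Z (τ.1 ω) ω - Y (τ.1 ω) ω| =
      liminf (fun k => ENNReal.ofReal |Z (τ.1 ω) ω - X k (τ.1 ω) ω|) atTop := by
    filter_upwards [hlim Q hQ] with ω hω
    refine (Tendsto.liminf_eq ?_).symm
    exact (ENNReal.continuous_ofReal.tendsto _).comp
      ((tendsto_const_nhds.sub (hω _ (τ.2.2 ω))).abs)
  calc ∫⁻ ω, ENNReal.ofReal |Z (τ.1 ω) ω - Y (τ.1 ω) ω| ∂Q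
      = ∫⁻ ω, liminf (fun k => ENNReal.ofReal |Z (τ.1 ω) ω - X k (τ.1 ω) ω|) atTop ∂Q :=
        lintegral_congr_ae hpt
    _ ≤ liminf (fun k => ∫⁻ ω, ENNReal.ofReal |Z (τ.1 ω) ω - X k (τ.1 ω) ω| ∂Q) atTop :=
        lintegral_liminf_le fun k => ((hZ τ).sub (hX k τ)).abs.ennreal_ofReal
    _ ≤ _ := liminf_le_liminf (Eventually.of_forall fun k => lintegral_le_dnorm τ hQ _)

theorem tendsto_dnorm_sub_of_cauchy {X : ℕ → ℝ → Ω → ℝ} {Y : ℝ → Ω → ℝ} {φ : ℕ → ℕ}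
    (hφ : Tendsto φ atTop atTop)
    (hX : ∀ k, ∀ τ : STimes ℱ T, Measurable fun ω => X k (τ.1 ω) ω)
    (hCauchy : ∀ ε : ℝ≥0∞, 0 < ε → ∃ N : ℕ, ∀ m n, N ≤ m → N ≤ n →
      Dnorm 𝒬 ℱ T (fun t ω => X m t ω - X n t ω) < ε)
    (hlim : ∀ Q ∈ 𝒬, ∀ᵐ ω ∂Q, ∀ t ∈ Icc 0 T,
      Tendsto (fun k => X (φ k) t ω) atTop (𝓝 (Y t ω))) :
    Tendsto (fun n => Dnorm 𝒬 ℱ T (fun t ω => X n t ω - Y t ω)) atTop (𝓝 0) := by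
  refine ENNReal.tendsto_nhds_zero.2 fun ε hε => ?_
  obtain ⟨N, hN⟩ := hCauchy ε hε
  filter_upwards [eventually_ge_atTop N] with n hn
  refine (dnorm_sub_le_liminf (hX n) (fun k => hX (φ k)) hlim).trans ?_
  refine liminf_le_of_frequently_le' (Eventually.frequently ?_)
  filter_upwards [hφ.eventually_ge_atTop N] with k hk
  exact (hN n (φ k) hn hk).le

noncomputable def dTail (𝒬 : Set (Measure Ω)) (ℱ : Filtration ℝ m0) (T : ℝ) (Y : ℝ → Ω → ℝ)
    (N : ℝ) : ℝ≥0∞ :=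
  ⨆ τ : STimes ℱ T, ⨆ Q ∈ 𝒬,
    ∫⁻ ω in {ω | N ≤ |Y (τ.1 ω) ω|}, ENNReal.ofReal |Y (τ.1 ω) ω| ∂Q

theorem dUnifIntegrable_iff {Y : ℝ → Ω → ℝ} :
    DUnifIntegrable 𝒬 ℱ T Y ↔ Tendsto (dTail 𝒬 ℱ T Y) atTop (𝓝 0) := Iff.rfl

theorem setLIntegral_le_dTail (τ : STimes ℱ T) {Q : Measure Ω} (hQ : Q ∈ 𝒬) (Y : ℝ → Ω → ℝ)
    (N : ℝ) :
    ∫⁻ ω in {ω | N ≤ |Y (τ.1 ω) ω|}, ENNReal.ofReal |Y (τ.1 ω) ω| ∂Q ≤ dTail 𝒬 ℱ T Y N :=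
  le_iSup_of_le τ (le_iSup₂_of_le Q hQ le_rfl)

theorem dTail_le_of_dnorm_sub {X Y : ℝ → Ω → ℝ}
    (hX : ∀ τ : STimes ℱ T, Measurable fun ω => X (τ.1 ω) ω)
    (hY : ∀ τ : STimes ℱ T, Measurable fun ω => Y (τ.1 ω) ω) {M N : ℝ} (hMN : 2 * M ≤ N) :
    dTail 𝒬 ℱ T Y N ≤ 2 * Dnorm 𝒬 ℱ T (fun t ω => X t ω - Y t ω) + dTail 𝒬 ℱ T X M +
      dTail 𝒬 ℱ T X (N / 2) :=
  iSup_le fun τ => iSup₂_le fun Q hQ =>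
    (setLIntegral_ofReal_abs_le_of_sub (hX τ) (hY τ) hMN).trans <| by
      gcongr
      exacts [lintegral_le_dnorm τ hQ _, setLIntegral_le_dTail τ hQ _ _,
        setLIntegral_le_dTail τ hQ _ _]

theorem DUnifIntegrable.of_tendsto_dnorm_sub {X : ℕ → ℝ → Ω → ℝ} {Y : ℝ → Ω → ℝ}
    (hUI : ∀ n, DUnifIntegrable 𝒬 ℱ T (X n))
    (hX : ∀ n, ∀ τ : STimes ℱ T, Measurable fun ω => X n (τ.1 ω) ω)
    (hY : ∀ τ : STimes ℱ T, Measurable fun ω => Y (τ.1 ω) ω)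
    (hlim : Tendsto (fun n => Dnorm 𝒬 ℱ T (fun t ω => X n t ω - Y t ω)) atTop (𝓝 0)) :
    DUnifIntegrable 𝒬 ℱ T Y := by
  refine dUnifIntegrable_iff.2 (ENNReal.tendsto_nhds_zero.2 fun ε hε => ?_)
  set δ := ε / 4
  have hδ : 0 < δ := ENNReal.div_pos hε.ne' (by norm_num)
  obtain ⟨n, hn⟩ := (ENNReal.tendsto_nhds_zero.1 hlim δ hδ).exists
  have hUIn := ENNReal.tendsto_nhds_zero.1 (dUnifIntegrable_iff.1 (hUI n)) δ hδ
  obtain ⟨M, hM⟩ := hUIn.exists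
  filter_upwards [(tendsto_id.atTop_div_const two_pos).eventually hUIn,
    eventually_ge_atTop (2 * M)] with N hN hMN
  calc dTail 𝒬 ℱ T Y N ≤ 2 * δ + δ + δ :=
        (dTail_le_of_dnorm_sub (hX n) hY hMN).trans (by gcongr; exact hN)
    _ = 4 * (ε / 4) := by ring
    _ ≤ ε := ENNReal.mul_div_le

open Classical in
noncomputable def finsetHitting (Z : ℝ → Ω → ℝ) (U : Set ℝ) (s : Finset ℝ) (T : ℝ) (ω : Ω) :
    ℝ :=
  if h : (s.filter fun t => Z t ω ∈ U).Nonempty then (s.filter fun t => Z t ω ∈ U).min' h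
  else T

section FinsetHitting

variable {Z : ℝ → Ω → ℝ} {U : Set ℝ} {s : Finset ℝ}

theorem finsetHitting_mem_Icc (hs : ∀ t ∈ s, t ∈ Icc 0 T) (hT : 0 ≤ T) (ω : Ω) :
    finsetHitting Z U s T ω ∈ Icc 0 T := by
  classical
  unfold finsetHitting
  split_ifs with h
  · exact hs _ (Finset.mem_filter.1 (Finset.min'_mem _ h)).1
  · exact ⟨hT, le_rfl⟩

theorem finsetHitting_mem {ω : Ω} (h : ∃ t ∈ s, Z t ω ∈ U) :
    Z (finsetHitting Z U s T ω) ω ∈ U := by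
  classical
  obtain ⟨t, hts, htU⟩ := h
  have hne : (s.filter fun t => Z t ω ∈ U).Nonempty := ⟨t, Finset.mem_filter.2 ⟨hts, htU⟩⟩
  rw [finsetHitting, dif_pos hne]
  exact (Finset.mem_filter.1 (Finset.min'_mem _ hne)).2

theorem finsetHitting_le_iff {r : ℝ} (hr : r < T) {ω : Ω} :
    finsetHitting Z U s T ω ≤ r ↔ ∃ t ∈ s, t ≤ r ∧ Z t ω ∈ U := by
  classical
  unfold finsetHitting
  split_ifs with h
  · rw [← not_lt, Finset.lt_min'_iff]
    simp only [Finset.mem_filter, not_forall, not_lt]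
    exact ⟨fun ⟨t, ⟨hts, htU⟩, htr⟩ => ⟨t, hts, htr, htU⟩,
      fun ⟨t, hts, htr, htU⟩ => ⟨t, ⟨hts, htU⟩, htr⟩⟩
  · refine ⟨fun hT => absurd hr hT.not_gt, fun ⟨t, hts, _, htU⟩ => ?_⟩
    exact absurd ⟨t, Finset.mem_filter.2 ⟨hts, htU⟩⟩ h

theorem isStoppingTime_finsetHitting (hZ : Adapted ℱ Z) (hU : MeasurableSet U)
    (hs : ∀ t ∈ s, t ∈ Icc 0 T) (hT : 0 ≤ T) :
    IsStoppingTime ℱ fun ω => (finsetHitting Z U s T ω : WithTop ℝ) := by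
  intro r
  simp only [WithTop.coe_le_coe]
  rcases le_or_gt T r with hTr | hrT
  · convert MeasurableSet.univ
    exact eq_univ_of_forall fun ω => (finsetHitting_mem_Icc hs hT ω).2.trans hTr
  · have hset : {ω | finsetHitting Z U s T ω ≤ r} = ⋃ t ∈ s.filter (· ≤ r), Z t ⁻¹' U := by
      ext ω
      simp [finsetHitting_le_iff hrT, and_assoc]
    rw [hset]
    exact Finset.measurableSet_biUnion _ fun t ht =>
      ℱ.mono (Finset.mem_filter.1 ht).2 _ (hZ t hU)

end FinsetHitting

theorem ofReal_mul_measure_le_dnorm_of_finset {μ : Measure Ω} (hμ : μ ∈ 𝒬) (hT : 0 ≤ T)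
    {Z : ℝ → Ω → ℝ} (hZ : Adapted ℱ Z) {s : Finset ℝ} (hs : ∀ t ∈ s, t ∈ Icc 0 T) (lam : ℝ) :
    ENNReal.ofReal lam * μ {ω | ∃ t ∈ s, lam < |Z t ω|} ≤ Dnorm 𝒬 ℱ T Z := by
  set U : Set ℝ := {x | lam < |x|}
  have hU : MeasurableSet U := measurableSet_lt measurable_const measurable_abs
  let τ : STimes ℱ T :=
    ⟨finsetHitting Z U s T, isStoppingTime_finsetHitting hZ hU hs hT, finsetHitting_mem_Icc hs hT⟩
  have hA : MeasurableSet {ω | ∃ t ∈ s, lam < |Z t ω|} := by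
    have hset : {ω | ∃ t ∈ s, lam < |Z t ω|} = ⋃ t ∈ s, Z t ⁻¹' U := by
      ext ω
      simp [U]
    rw [hset]
    exact Finset.measurableSet_biUnion _ fun t _ => ℱ.le t _ (hZ t hU)
  calc ENNReal.ofReal lam * μ {ω | ∃ t ∈ s, lam < |Z t ω|}
      = ∫⁻ ω, {ω | ∃ t ∈ s, lam < |Z t ω|}.indicator (fun _ => ENNReal.ofReal lam) ω ∂μ :=
        (lintegral_indicator_const hA _).symm
    _ ≤ ∫⁻ ω, ENNReal.ofReal |Z (τ.1 ω) ω| ∂μ :=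
        lintegral_mono <| indicator_le fun ω hω =>
          ENNReal.ofReal_le_ofReal (finsetHitting_mem (U := U) hω).le
    _ ≤ Dnorm 𝒬 ℱ T Z := lintegral_le_dnorm τ hμ Z

theorem ofReal_mul_measure_le_dnorm {μ : Measure Ω} (hμ : μ ∈ 𝒬) (hT : 0 ≤ T)
    {Z : ℝ → Ω → ℝ} (hZ : Adapted ℱ Z)
    (hrc : ∀ ω t, ContinuousWithinAt (fun s => Z s ω) (Ici t) t) (lam : ℝ) :
    ENNReal.ofReal lam * μ {ω | ∃ t ∈ Icc 0 T, lam < |Z t ω|} ≤ Dnorm 𝒬 ℱ T Z := by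
  classical
  have : Countable (ratGrid T) := (ratGrid_countable T).to_subtype
  set A : Finset (ratGrid T) → Set Ω := fun F =>
    {ω | ∃ t ∈ F.map (Function.Embedding.subtype _), lam < |Z t ω|}
  have hsub : {ω | ∃ t ∈ Icc 0 T, lam < |Z t ω|} ⊆ ⋃ F, A F := by
    rintro ω ⟨t, ht, hlt⟩
    obtain ⟨s, hs, hsU⟩ := exists_mem_ratGrid_of_continuousWithinAt
      (U := {x | lam < |x|}) (isOpen_lt continuous_const continuous_abs) (hrc ω t) ht hlt
    exact mem_iUnion.2 ⟨{⟨s, hs⟩}, s, by simp, hsU⟩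
  have hmono : Monotone A := fun F G hFG ω ⟨t, ht, hlt⟩ =>
    ⟨t, Finset.map_subset_map.2 hFG ht, hlt⟩
  calc ENNReal.ofReal lam * μ {ω | ∃ t ∈ Icc 0 T, lam < |Z t ω|}
      ≤ ENNReal.ofReal lam * μ (⋃ F, A F) := by gcongr
    _ = ⨆ F, ENNReal.ofReal lam * μ (A F) := by
        rw [hmono.directed_le.measure_iUnion, ENNReal.mul_iSup]
    _ ≤ Dnorm 𝒬 ℱ T Z := iSup_le fun F => ofReal_mul_measure_le_dnorm_of_finset hμ hT hZ
        (fun t ht => by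
          obtain ⟨s, -, rfl⟩ := Finset.mem_map.1 ht
          exact ratGrid_subset_Icc hT s.2) lam

theorem ae_eventually_abs_sub_le {μ : Measure Ω} (hμ : μ ∈ 𝒬) (hT : 0 ≤ T)
    {X : ℕ → ℝ → Ω → ℝ} (hX : ∀ k, Adapted ℱ (X k))
    (hrc : ∀ k ω t, ContinuousWithinAt (fun s => X k s ω) (Ici t) t)
    (hsmall : ∀ k, Dnorm 𝒬 ℱ T (fun t ω => X (k + 1) t ω - X k t ω) ≤
      ENNReal.ofReal ((8⁻¹ : ℝ) ^ k)) :
    ∀ᵐ ω ∂μ, ∀ᶠ k in atTop, ∀ t ∈ Icc 0 T, |X (k + 1) t ω - X k t ω| ≤ (2⁻¹ : ℝ) ^ k := by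
  set B : ℕ → Set Ω := fun k =>
    {ω | ∃ t ∈ Icc 0 T, (2⁻¹ : ℝ) ^ k < |X (k + 1) t ω - X k t ω|}
  have hB : ∀ k, μ (B k) ≤ ENNReal.ofReal ((4⁻¹ : ℝ) ^ k) := by
    intro k
    have hpos : ENNReal.ofReal ((2⁻¹ : ℝ) ^ k) ≠ 0 := (ENNReal.ofReal_pos.2 (by positivity)).ne'
    rw [← ENNReal.mul_le_mul_iff_right hpos ENNReal.ofReal_ne_top,
      ← ENNReal.ofReal_mul (by positivity), ← mul_pow]
    refine (ofReal_mul_measure_le_dnorm hμ hT (fun t => (hX _ t).sub (hX k t))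
      (fun ω t => (hrc _ ω t).sub (hrc k ω t)) _).trans ((hsmall k).trans_eq ?_)
    norm_num
  have hsum : ∑' k, μ (B k) ≠ ⊤ := by
    refine ne_top_of_le_ne_top ?_ (ENNReal.tsum_le_tsum hB)
    rw [← ENNReal.ofReal_tsum_of_nonneg (fun k => by positivity)
      (summable_geometric_of_lt_one (by norm_num) (by norm_num))]
    exact ENNReal.ofReal_ne_top
  filter_upwards [ae_eventually_notMem hsum] with ω hω
  filter_upwards [hω] with k hk t ht
  exact not_lt.1 fun hlt => hk ⟨t, ht, hlt⟩

theorem exists_adapted_cadlag_ae_limit {μ : Measure Ω} (hμ : μ ∈ 𝒬) (hT : 0 ≤ T)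
    (hcomplete : ∀ t, ∀ s : Set Ω, μ s = 0 → MeasurableSet[ℱ t] s)
    {X : ℕ → ℝ → Ω → ℝ} (hX : ∀ k, Adapted ℱ (X k)) (hXc : ∀ k, IsCadlag (X k))
    (hsmall : ∀ k, Dnorm 𝒬 ℱ T (fun t ω => X (k + 1) t ω - X k t ω) ≤
      ENNReal.ofReal ((8⁻¹ : ℝ) ^ k)) :
    ∃ Y : ℝ → Ω → ℝ, Adapted ℱ Y ∧ IsCadlag Y ∧
      ∀ᵐ ω ∂μ, ∀ t ∈ Icc 0 T, Tendsto (fun k => X k t ω) atTop (𝓝 (Y t ω)) := by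
  classical
  set P : Ω → Prop := fun ω =>
    ∀ᶠ k in atTop, ∀ t ∈ Icc 0 T, |X (k + 1) t ω - X k t ω| ≤ (2⁻¹ : ℝ) ^ k
  have hP : ∀ᵐ ω ∂μ, P ω :=
    ae_eventually_abs_sub_le hμ hT hX (fun k ω => (hXc k ω).1) hsmall
  have hPmeas : ∀ t, MeasurableSet[ℱ t] {ω | P ω} := fun t => by
    simpa only [compl_ofPred, not_not] using (hcomplete t _ (ae_iff.1 hP)).compl
  set L : ℝ → Ω → ℝ := fun t ω => limUnder atTop fun k => X k t ω
  have hL : ∀ t, Measurable[ℱ t] (L t) := fun t => by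
    let := ℱ t
    exact (StronglyMeasurable.limUnder fun k => (hX k t).stronglyMeasurable).measurable
  have hunif : ∀ ω, P ω →
      TendstoUniformlyOn (fun k t => X k t ω) (fun t => L t ω) atTop (Icc 0 T) := by
    intro ω hω
    obtain ⟨K, hK⟩ := eventually_atTop.1 hω
    refine tendstoUniformlyOn_limUnder_of_dist_le_geometric (r := 2⁻¹) (K := K) (by norm_num)
      (by norm_num) fun k hk t ht => ?_
    rw [dist_comm, Real.dist_eq]
    exact hK k hk t ht
  refine ⟨fun t ω => if P ω then freeze T (fun s => L s ω) t else 0, fun t => ?_,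
    isCadlag_iff_forall_isCadlagPath.2 fun ω => ?_, ?_⟩
  · refine Measurable.ite (hPmeas t) ?_ measurable_const
    by_cases ht : t < 0
    · simp only [freeze, if_pos ht, measurable_const]
    · simp only [freeze, if_neg ht]
      exact (hL _).mono (ℱ.mono (min_le_left t T)) le_rfl
  · by_cases hω : P ω
    · simp only [if_pos hω]
      exact IsCadlagPath.of_tendstoUniformly (fun k => IsCadlagPath.freeze (hXc k ω) T)
        ((hunif ω hω).freeze hT)
    · simp only [if_neg hω]
      exact ⟨fun t => continuousWithinAt_const, fun t => ⟨0, tendsto_const_nhds⟩⟩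
  · filter_upwards [hP] with ω hω t ht
    simp only [if_pos hω, freeze_of_mem_Icc _ ht]
    exact (hunif ω hω).tendsto_at ht

end Processes

theorem classD_complete_general
    (μ : Measure Ω)
    (ℱ : Filtration ℝ m0) (T : ℝ) (hT : 0 < T)
    (hcomplete : ∀ t, ∀ s : Set Ω, μ s = 0 → MeasurableSet[ℱ t] s)
    (𝒬 : Set (Measure Ω)) (hμ𝒬 : μ ∈ 𝒬)
    (hequiv : ∀ Q ∈ 𝒬, Q ≪ μ ∧ μ ≪ Q)
    (Yseq : ℕ → ℝ → Ω → ℝ)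
    (hadapted : ∀ n, Adapted ℱ (Yseq n))
    (hcadlag : ∀ n, IsCadlag (Yseq n))
    (hnorm : ∀ n, Dnorm 𝒬 ℱ T (Yseq n) < ⊤)
    (hUI : ∀ n, DUnifIntegrable 𝒬 ℱ T (Yseq n))
    (hCauchy : ∀ ε : ℝ≥0∞, 0 < ε → ∃ N : ℕ, ∀ m n, N ≤ m → N ≤ n →
      Dnorm 𝒬 ℱ T (fun t ω => Yseq m t ω - Yseq n t ω) < ε) :
    ∃ Y : ℝ → Ω → ℝ, Adapted ℱ Y ∧ IsCadlag Y ∧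
      Dnorm 𝒬 ℱ T Y < ⊤ ∧ DUnifIntegrable 𝒬 ℱ T Y ∧
      Tendsto (fun n => Dnorm 𝒬 ℱ T (fun t ω => Yseq n t ω - Y t ω)) atTop (nhds 0) := by
  choose N hN using fun k : ℕ =>
    hCauchy (ENNReal.ofReal ((8⁻¹ : ℝ) ^ k)) (ENNReal.ofReal_pos.2 (by positivity))
  obtain ⟨φ, hφ, hφN⟩ := extraction_forall_of_eventually' fun k => ⟨N k, fun n hn => hn⟩
  have hsmall : ∀ k, Dnorm 𝒬 ℱ T (fun t ω => Yseq (φ (k + 1)) t ω - Yseq (φ k) t ω) ≤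
      ENNReal.ofReal ((8⁻¹ : ℝ) ^ k) := fun k =>
    (hN k _ _ ((hφN k).trans (hφ.monotone k.le_succ)) (hφN k)).le
  obtain ⟨Y, hYad, hYc, hYlim⟩ := exists_adapted_cadlag_ae_limit hμ𝒬 hT.le hcomplete
    (fun k => hadapted (φ k)) (fun k => hcadlag (φ k)) hsmall
  have hmeas : ∀ n (τ : STimes ℱ T), Measurable fun ω => Yseq n (τ.1 ω) ω := fun n =>
    (hcadlag n).measurable_stopped (hadapted n)
  have hconv := tendsto_dnorm_sub_of_cauchy hφ.tendsto_atTop hmeas hCauchy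
    fun Q hQ => (hequiv Q hQ).1.ae_le hYlim
  obtain ⟨n, hn⟩ := (hconv.eventually (gt_mem_nhds one_pos)).exists
  refine ⟨Y, hYad, hYc, ?_,
    DUnifIntegrable.of_tendsto_dnorm_sub hUI hmeas (hYc.measurable_stopped hYad) hconv, hconv⟩
  exact (dnorm_le_dnorm_sub_add (hmeas n)).trans_lt
    (ENNReal.add_lt_top.2 ⟨hn.trans ENNReal.one_lt_top, hnorm n⟩)

/-- **Theorem A.2.** The space `𝒟` of adapted càdlàg processes which are uniformly integrable
under the family `𝒬` and have finite norm `‖·‖_𝒟` is complete: every Cauchy sequence in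
`‖·‖_𝒟` admits a limit in `𝒟`. -/
theorem classD_complete
    (μ : Measure Ω) [IsProbabilityMeasure μ]
    (ℱ : Filtration ℝ m0) (T : ℝ) (hT : 0 < T)
    (hcomplete : ∀ t, ∀ s : Set Ω, μ s = 0 → MeasurableSet[ℱ t] s)
    (𝒬 : Set (Measure Ω)) (hμ𝒬 : μ ∈ 𝒬)
    (hprob : ∀ Q ∈ 𝒬, IsProbabilityMeasure Q)
    (hequiv : ∀ Q ∈ 𝒬, Q ≪ μ ∧ μ ≪ Q)
    (Yseq : ℕ → ℝ → Ω → ℝ)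
    (hadapted : ∀ n, Adapted ℱ (Yseq n))
    (hcadlag : ∀ n, IsCadlag (Yseq n))
    (hnorm : ∀ n, Dnorm 𝒬 ℱ T (Yseq n) < ⊤)
    (hUI : ∀ n, DUnifIntegrable 𝒬 ℱ T (Yseq n))
    (hCauchy : ∀ ε : ℝ≥0∞, 0 < ε → ∃ N : ℕ, ∀ m n, N ≤ m → N ≤ n →
      Dnorm 𝒬 ℱ T (fun t ω => Yseq m t ω - Yseq n t ω) < ε) :
    ∃ Y : ℝ → Ω → ℝ, Adapted ℱ Y ∧ IsCadlag Y ∧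
      Dnorm 𝒬 ℱ T Y < ⊤ ∧ DUnifIntegrable 𝒬 ℱ T Y ∧
      Tendsto (fun n => Dnorm 𝒬 ℱ T (fun t ω => Yseq n t ω - Y t ω)) atTop (nhds 0) :=
  classD_complete_general μ ℱ T hT hcomplete 𝒬 hμ𝒬 hequiv Yseq hadapted hcadlag hnorm hUI hCauchy
end
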